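/- arXiv:1802.01545 — 8 statements merged into one kernel-verified Lean document; each statement's English description precedes it below -/
import Mathlib

section
/- Let N ≥ 1, let r_1 ≤ … ≤ r_N and b_1 ≤ … ≤ b_N be real numbers, and let f : [0,∞) → ℝ be convex and nondecreasing. Then the criss-cross Hamiltonian cycle is optimal: for every pair of permutations (σ,π) ∈ S_N × S_N one has E(σ̃,π̃) ≤ E(σ,π). -/
/-!
Put `F a c = f |r a - b c|`. Since `x ↦ f |x|` is convex and `r`, `b` are sorted, `F` is a
Monge array. The cycle `(σ, π)` is the union of the two perfect matchings `π σ⁻¹` and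
`π τ⁻¹ σ⁻¹`, and because the cycle is connected every cut `{0, …, k} | {k + 1, …, n}` is
crossed by one of them. Undoing crossings one transposition at a time, the Monge inequality
shows that a matching costs at least the diagonal cost plus, for every cut it crosses, the gain
`F k (k+1) + F (k+1) k - F k k - F (k+1) (k+1) ≥ 0`. The two matchings of the criss-cross
cycle are the products of the adjacent transpositions `(k k+1)` over even `k` and over odd `k`,
so they attain this lower bound with every cut paid exactly once.
-/

/-- The criss-cross permutation σ̃ of {1,…,N}, written 0-indexed: position `i`
(1-indexed `i+1`) is sent to `2*i` when `2*i < N` (1-indexed: `σ̃(j)=2j-1` for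
`j ≤ (N+1)/2`) and to `2*(N-1-i)+1` otherwise (1-indexed: `σ̃(j)=2N-2j+2` for
`j > (N+1)/2`). -/
noncomputable def sigmaTilde (N : ℕ) : Equiv.Perm (Fin N) :=
  Equiv.ofBijective
    (fun i => if h : 2 * i.val < N then ⟨2 * i.val, h⟩
      else ⟨2 * (N - 1 - i.val) + 1, by have := i.isLt; omega⟩)
    (Finite.injective_iff_bijective.mp (by
      intro a b hab
      have ha := a.isLt; have hb := b.isLt
      by_cases h1 : 2 * a.val < N <;> by_cases h2 : 2 * b.val < N <;>
        simp only [h1, h2, dif_pos, dif_neg, not_false_iff, Fin.mk.injEq, Fin.ext_iff] at hab ⊢ <;>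
        omega))

/-- The criss-cross permutation π̃ = σ̃ ∘ I, where `I = Fin.revPerm` is the inversion
`I(j) = N+1-j` (0-indexed: `i ↦ N-1-i`).  Here `(f * g) i = f (g i)`. -/
noncomputable def piTilde (N : ℕ) : Equiv.Perm (Fin N) := sigmaTilde N * Fin.revPerm

/-- The cost `E(σ,π)` of the Hamiltonian cycle of `K_{N,N}` encoded by the pair of
permutations `(σ,π)`: red points `r`, blue points `b`, edge cost `f` applied to the
Euclidean distance, and `τ = finRotate N` the left rotation `τ(i)=i+1 (mod N)`. -/
noncomputable def cycleCost (N : ℕ) (r b : Fin N → ℝ) (f : ℝ → ℝ)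
    (σ π : Equiv.Perm (Fin N)) : ℝ :=
  ∑ i : Fin N, (f |r (σ i) - b (π i)| + f |r (σ (finRotate N i)) - b (π i)|)

open Finset Equiv

theorem ConvexOn.map_add_map_le_of_mem_Icc {s : Set ℝ} {g : ℝ → ℝ} (hg : ConvexOn ℝ s g)
    {u v u' v' : ℝ} (hu : u ∈ s) (hv : v ∈ s) (hu' : u' ∈ Set.Icc u v)
    (hsum : u' + v' = u + v) : g u' + g v' ≤ g u + g v := by
  rw [← segment_eq_Icc (hu'.1.trans hu'.2)] at hu'
  obtain ⟨a, c, ha, hc, hac, rfl⟩ := hu'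
  obtain rfl : v' = c • u + a • v := by
    simp only [smul_eq_mul] at hsum ⊢
    linear_combination hsum - u * hac - v * hac
  have h₁ := hg.2 hu hv ha hc hac
  have h₂ := hg.2 hu hv hc ha ((add_comm c a).trans hac)
  linear_combination h₁ + h₂ + (g u + g v) * hac

theorem ConvexOn.comp_abs {f : ℝ → ℝ} (hf : ConvexOn ℝ (Set.Ici 0) f)
    (hf' : MonotoneOn f (Set.Ici 0)) : ConvexOn ℝ Set.univ fun x => f |x| := by
  refine ⟨convex_univ, fun x _ y _ a c ha hc hac => ?_⟩
  have habs : |a • x + c • y| ≤ a • |x| + c • |y| := by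
    simpa [abs_mul, abs_of_nonneg ha, abs_of_nonneg hc] using abs_add_le (a * x) (c * y)
  exact (hf' (Set.mem_Ici.2 (abs_nonneg _)) (Set.mem_Ici.2 (by positivity)) habs).trans
    (hf.2 (abs_nonneg x) (abs_nonneg y) ha hc hac)

def IsMonge {α β : Type*} [Preorder α] [Preorder β] (F : α → β → ℝ) : Prop :=
  ∀ ⦃a a'⦄, a ≤ a' → ∀ ⦃c c'⦄, c ≤ c' → F a c + F a' c' ≤ F a c' + F a' c

theorem isMonge_of_convexOn {α β : Type*} [Preorder α] [Preorder β] {g : ℝ → ℝ}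
    (hg : ConvexOn ℝ Set.univ g) {x : α → ℝ} {y : β → ℝ} (hx : Monotone x)
    (hy : Monotone y) : IsMonge fun a c => g (x a - y c) := by
  intro a a' ha c c' hc
  exact hg.map_add_map_le_of_mem_Icc trivial trivial
    ⟨by linarith [hy hc], by linarith [hx ha]⟩ (by ring)

def swapGain (F : ℕ → ℕ → ℝ) (a c : ℕ) : ℝ := F a c + F c a - F a a - F c c

namespace IsMonge

variable {F : ℕ → ℕ → ℝ} (hF : IsMonge F)
include hF

theorem swapGain_nonneg {a c : ℕ} (h : a ≤ c) : 0 ≤ swapGain F a c := by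
  have := hF h h
  unfold swapGain
  linarith

theorem swapGain_add_swapGain_le {a s c : ℕ} (has : a ≤ s) (hsc : s ≤ c) :
    swapGain F a s + swapGain F s c ≤ swapGain F a c := by
  have := hF has hsc
  have := hF hsc has
  unfold swapGain
  linarith

theorem sum_Ico_swapGain_succ_le {a c : ℕ} (hac : a ≤ c) :
    ∑ k ∈ Ico a c, swapGain F k (k + 1) ≤ swapGain F a c := by
  induction c, hac using Nat.le_induction with
  | base => simp [swapGain]
  | succ c hac ih =>
    rw [sum_Ico_succ_top hac]
    linarith [hF.swapGain_add_swapGain_le hac c.le_succ]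

theorem swapGain_min_le {j m c : ℕ} (hm : j < m) (hc : j < c) :
    swapGain F j (min m c) ≤ F j c + F m j - F j j - F m c := by
  rcases le_total m c with h | h
  · have := hF hm.le h
    rw [min_eq_left h, swapGain]
    linarith
  · have := hF h hc.le
    rw [min_eq_right h, swapGain]
    linarith

end IsMonge

theorem Equiv.Perm.exists_lt_apply_and_lt_inv_apply {α : Type*} [LinearOrder α] [Fintype α]
    {μ : Perm α} (hμ : μ ≠ 1) : ∃ x, x < μ x ∧ x < μ⁻¹ x := by
  classical
  have hne : μ.support.Nonempty := nonempty_iff_ne_empty.2 (support_eq_empty_iff.not.2 hμ)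
  set x := μ.support.min' hne
  have hx : x ∈ μ.support := min'_mem _ hne
  have hx' : μ⁻¹ x ∈ μ.support := by rwa [← support_inv, apply_mem_support, support_inv]
  refine ⟨x, lt_of_le_of_ne (min'_le _ _ (apply_mem_support.2 hx)) (mem_support.1 hx).symm,
    lt_of_le_of_ne (min'_le _ _ hx') fun h => mem_support.1 hx ?_⟩
  rw [eq_inv_iff_eq.1 h]

theorem Equiv.Perm.sum_apply_eq_sum_swap_mul_apply_add {α M : Type*} [DecidableEq α] [Fintype α]
    [AddCommGroup M] (G : α → α → M) {μ : Perm α} {x : α} (hx : μ x ≠ x) :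
    ∑ i, G i (μ i) = ∑ i, G i ((swap x (μ x) * μ) i)
      + (G x (μ x) + G (μ⁻¹ x) x - G x x - G (μ⁻¹ x) (μ x)) := by
  have hxy : x ≠ μ⁻¹ x := fun h => hx (by rw [eq_inv_iff_eq.1 h])
  rw [← sub_eq_iff_eq_add', ← sum_sub_distrib, Fintype.sum_eq_add x (μ⁻¹ x) hxy]
  · simp only [Perm.mul_apply, swap_apply_left, swap_apply_right, Perm.coe_inv, apply_symm_apply]
    abel
  · rintro i ⟨hix, hiy⟩
    rw [Perm.mul_apply, swap_apply_of_ne_of_ne, sub_self]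
    · exact fun h => hiy (eq_inv_iff_eq.2 h)
    · exact fun h => hix (μ.injective h)

def CrossesCut {m : ℕ} (μ : Perm (Fin m)) (k : ℕ) : Prop :=
  ∃ i : Fin m, min (i : ℕ) (μ i) ≤ k ∧ k < max (i : ℕ) (μ i)

instance {m : ℕ} (μ : Perm (Fin m)) : DecidablePred (CrossesCut μ) :=
  fun _ => inferInstanceAs (Decidable (∃ _, _))

theorem CrossesCut.swap_mul_or_mem_Ico {m k : ℕ} {μ : Perm (Fin m)} (hk : CrossesCut μ k)
    {x : Fin m} (hx : x < μ x) (hx' : x < μ⁻¹ x) :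
    CrossesCut (swap x (μ x) * μ) k ∨ k ∈ Ico (x : ℕ) (min (μ⁻¹ x : ℕ) (μ x)) := by
  obtain ⟨i, hi⟩ := hk
  have hy : μ (μ⁻¹ x) = x := μ.apply_symm_apply x
  by_cases hix : i = x ∨ i = μ⁻¹ x
  · have hk : (x : ℕ) ≤ k ∧ (k < μ x ∨ k < μ⁻¹ x) := by
      rcases hix with rfl | rfl <;> [skip; rw [hy] at hi] <;> omega
    by_cases hkt : k < min (μ⁻¹ x : ℕ) (μ x)
    · exact .inr (mem_Ico.2 ⟨hk.1, hkt⟩)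
    · refine .inl ⟨μ⁻¹ x, ?_⟩
      rw [Perm.mul_apply, hy, swap_apply_left]
      omega
  · obtain ⟨hix, hiy⟩ := not_or.1 hix
    refine .inl ⟨i, ?_⟩
    rwa [Perm.mul_apply, swap_apply_of_ne_of_ne (fun h => hiy (Perm.eq_inv_iff_eq.2 h))
      (fun h => hix (μ.injective h))]

theorem Finset.sum_le_sum_add_sum_of_subset_union {ι : Type*} [DecidableEq ι] {s t u : Finset ι}
    {f : ι → ℝ} (h : s ⊆ t ∪ u) (hf : ∀ i ∈ t ∪ u, 0 ≤ f i) :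
    ∑ i ∈ s, f i ≤ ∑ i ∈ t, f i + ∑ i ∈ u, f i := by
  rw [← sum_union_inter]
  exact le_add_of_le_of_nonneg (sum_le_sum_of_subset_of_nonneg h fun i hi _ => hf i hi)
    (sum_nonneg fun i hi => hf i (mem_union_left _ (mem_inter.1 hi).1))

theorem IsMonge.sum_diag_add_sum_crossesCut_le {F : ℕ → ℕ → ℝ} (hF : IsMonge F) {n : ℕ}
    (μ : Perm (Fin (n + 1))) :
    ∑ i : Fin (n + 1), F i i + ∑ k ∈ range n with CrossesCut μ k, swapGain F k (k + 1)
      ≤ ∑ i : Fin (n + 1), F i (μ i) := by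
  by_cases hμ : μ = 1
  · subst hμ
    have : ∀ k, ¬CrossesCut (1 : Perm (Fin (n + 1))) k := by
      rintro k ⟨i, hi⟩
      simp only [Perm.one_apply] at hi
      omega
    simp [this]
  -- Make the least moved point `x` a fixed point; this uncrosses at most the cuts in `[x, t)`.
  obtain ⟨x, hx, hx'⟩ := Perm.exists_lt_apply_and_lt_inv_apply hμ
  have hxμ : μ x ≠ x := hx.ne'
  set μ' := swap x (μ x) * μ
  set t := min (μ⁻¹ x : ℕ) (μ x)
  have ih := hF.sum_diag_add_sum_crossesCut_le μ'
  have hcost := Perm.sum_apply_eq_sum_swap_mul_apply_add (fun i j : Fin (n + 1) => F i j) hxμ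
  have hgain : ∑ k ∈ Ico (x : ℕ) t, swapGain F k (k + 1)
      ≤ F x (μ x) + F (μ⁻¹ x) x - F x x - F (μ⁻¹ x) (μ x) :=
    (hF.sum_Ico_swapGain_succ_le (by omega)).trans (hF.swapGain_min_le hx' hx)
  have hcut : ∑ k ∈ range n with CrossesCut μ k, swapGain F k (k + 1)
      ≤ ∑ k ∈ range n with CrossesCut μ' k, swapGain F k (k + 1)
        + ∑ k ∈ Ico (x : ℕ) t, swapGain F k (k + 1) := by
    refine sum_le_sum_add_sum_of_subset_union (fun k hk => ?_)
      fun k _ => hF.swapGain_nonneg k.le_succ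
    obtain ⟨hkn, hkμ⟩ := mem_filter.1 hk
    rcases hkμ.swap_mul_or_mem_Ico hx hx' with h | h
    · exact mem_union_left _ (mem_filter.2 ⟨hkn, h⟩)
    · exact mem_union_right _ h
  linarith
termination_by μ.support.card
decreasing_by exact Perm.card_support_swap_mul hxμ

theorem iff_zero_of_forall_finRotate_iff {n : ℕ} {P : Fin (n + 1) → Prop}
    (hP : ∀ i, P (finRotate (n + 1) i) ↔ P i) (i : Fin (n + 1)) : P i ↔ P 0 := by
  induction i using Fin.induction with
  | zero => rfl
  | succ i ih => rw [← Fin.coeSucc_eq_succ, ← finRotate_apply, hP, ih]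

theorem crossesCut_mul_inv_or_crossesCut_mul_finRotate_inv {n k : ℕ}
    (σ π : Perm (Fin (n + 1))) (hk : k < n) :
    CrossesCut (π * σ⁻¹) k ∨ CrossesCut (π * (finRotate (n + 1))⁻¹ * σ⁻¹) k := by
  by_contra! h
  -- otherwise `{i | σ i ≤ k}` is a proper nonempty rotation-invariant subset of the cycle
  have hrot : ∀ i, (σ (finRotate (n + 1) i) : ℕ) ≤ k ↔ (σ i : ℕ) ≤ k := by
    intro i
    have h₁ := not_exists.1 h.1 (σ i)
    have h₂ := not_exists.1 h.2 (σ (finRotate (n + 1) i))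
    simp only [Perm.mul_apply, Perm.coe_inv, symm_apply_apply] at h₁ h₂
    omega
  have hP := iff_zero_of_forall_finRotate_iff (P := fun i => (σ i : ℕ) ≤ k) hrot
  have h₀ := hP (σ⁻¹ 0)
  have hₙ := hP (σ⁻¹ (Fin.last n))
  simp only [Perm.coe_inv, apply_symm_apply, Fin.val_zero, Fin.val_last] at h₀ hₙ
  omega

theorem cycleCost_eq_sum_add_sum {N : ℕ} {r b : Fin N → ℝ} {f : ℝ → ℝ} {F : ℕ → ℕ → ℝ}
    (hF : ∀ i j : Fin N, F i j = f |r i - b j|) (σ π : Perm (Fin N)) :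
    cycleCost N r b f σ π = ∑ i : Fin N, F i ((π * σ⁻¹) i)
      + ∑ i : Fin N, F i ((π * (finRotate N)⁻¹ * σ⁻¹) i) := by
  simp only [hF]
  rw [cycleCost, sum_add_distrib]
  congr 1
  · rw [← Equiv.sum_comp σ fun i => f |r i - b ((π * σ⁻¹) i)|]
    simp
  · rw [← Equiv.sum_comp ((finRotate N).trans σ)
      fun i => f |r i - b ((π * (finRotate N)⁻¹ * σ⁻¹) i)|]
    simp only [trans_apply, Perm.mul_apply, Perm.coe_inv, symm_apply_apply]

theorem IsMonge.two_mul_sum_diag_add_sum_swapGain_le {F : ℕ → ℕ → ℝ} (hF : IsMonge F)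
    {n : ℕ} (σ π : Perm (Fin (n + 1))) :
    2 * ∑ i : Fin (n + 1), F i i + ∑ k ∈ range n, swapGain F k (k + 1)
      ≤ ∑ i : Fin (n + 1), F i ((π * σ⁻¹) i)
        + ∑ i : Fin (n + 1), F i ((π * (finRotate (n + 1))⁻¹ * σ⁻¹) i) := by
  have hcut : ∑ k ∈ range n, swapGain F k (k + 1)
      ≤ ∑ k ∈ range n with CrossesCut (π * σ⁻¹) k, swapGain F k (k + 1)
        + ∑ k ∈ range n with CrossesCut (π * (finRotate (n + 1))⁻¹ * σ⁻¹) k,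
          swapGain F k (k + 1) := by
    refine sum_le_sum_add_sum_of_subset_union (fun k hk => ?_)
      fun k _ => hF.swapGain_nonneg k.le_succ
    rcases crossesCut_mul_inv_or_crossesCut_mul_finRotate_inv σ π (mem_range.1 hk) with h | h
    · exact mem_union_left _ (mem_filter.2 ⟨hk, h⟩)
    · exact mem_union_right _ (mem_filter.2 ⟨hk, h⟩)
  linarith [hF.sum_diag_add_sum_crossesCut_le (π * σ⁻¹),
    hF.sum_diag_add_sum_crossesCut_le (π * (finRotate (n + 1))⁻¹ * σ⁻¹)]

/-- The truncated `0 - 1 = 0` makes `0` a fixed point when `p` is odd. -/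
def adjSwapFun (p n k : ℕ) : ℕ :=
  if k % 2 = p % 2 then (if k < n then k + 1 else k) else k - 1

def adjSwaps (p n : ℕ) : Perm (Fin (n + 1)) :=
  Function.Involutive.toPerm
    (fun i => ⟨adjSwapFun p n i, by have := i.isLt; unfold adjSwapFun; split_ifs <;> omega⟩)
    fun i => Fin.ext <| by have := i.isLt; simp only [adjSwapFun]; split_ifs <;> omega

@[simp]
theorem adjSwaps_val (p n : ℕ) (i : Fin (n + 1)) : (adjSwaps p n i : ℕ) = adjSwapFun p n i :=
  rfl

theorem sum_adjSwaps (F : ℕ → ℕ → ℝ) (p n : ℕ) :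
    ∑ i : Fin (n + 1), F i (adjSwaps p n i)
      = ∑ i : Fin (n + 1), F i i + ∑ k ∈ range n with k % 2 = p % 2, swapGain F k (k + 1) := by
  set up : ℕ → ℝ := fun k => if k % 2 = p % 2 ∧ k < n then F k (k + 1) - F k k else 0
  set down : ℕ → ℝ := fun k => if k % 2 ≠ p % 2 ∧ 0 < k then F k (k - 1) - F k k else 0
  have hsplit (k : ℕ) : F k (adjSwapFun p n k) = F k k + up k + down k := by
    simp only [up, down, adjSwapFun]
    split_ifs <;> first | omega | simp_all
  have hup : ∑ k ∈ range (n + 1), up k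
      = ∑ k ∈ range n with k % 2 = p % 2, (F k (k + 1) - F k k) := by
    rw [sum_range_succ, sum_filter, show up n = 0 from if_neg (by omega), add_zero]
    refine sum_congr rfl fun k hk => ?_
    have := mem_range.1 hk
    by_cases h : k % 2 = p % 2 <;> simp [up, h, this]
  have hdown : ∑ k ∈ range (n + 1), down k
      = ∑ k ∈ range n with k % 2 = p % 2, (F (k + 1) k - F (k + 1) (k + 1)) := by
    rw [sum_range_succ', sum_filter, show down 0 = 0 from if_neg (by omega), add_zero]
    refine sum_congr rfl fun k _ => ?_
    by_cases h : k % 2 = p % 2 <;> simp [down, h] <;> omega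
  simp only [adjSwaps_val, hsplit]
  rw [Fin.sum_univ_eq_sum_range (fun k => F k k + up k + down k),
    Fin.sum_univ_eq_sum_range (fun k => F k k), sum_add_distrib, sum_add_distrib, hup, hdown,
    add_assoc, ← sum_add_distrib]
  exact congrArg _ (sum_congr rfl fun k _ => by unfold swapGain; ring)

theorem sum_adjSwaps_zero_add_sum_adjSwaps_one (F : ℕ → ℕ → ℝ) (n : ℕ) :
    ∑ i : Fin (n + 1), F i (adjSwaps 0 n i) + ∑ i : Fin (n + 1), F i (adjSwaps 1 n i)
      = 2 * ∑ i : Fin (n + 1), F i i + ∑ k ∈ range n, swapGain F k (k + 1) := by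
  rw [sum_adjSwaps, sum_adjSwaps, ← sum_filter_add_sum_filter_not (range n) (· % 2 = 0)]
  simp only [Nat.zero_mod, Nat.one_mod, ← Nat.mod_two_ne_zero]
  ring

theorem sigmaTilde_val (n : ℕ) (i : Fin (n + 1)) :
    (sigmaTilde (n + 1) i : ℕ) =
      if 2 * (i : ℕ) < n + 1 then 2 * (i : ℕ) else 2 * (n - i) + 1 := by
  simp only [sigmaTilde, Equiv.ofBijective_apply]
  split_ifs <;> simp only [Nat.add_sub_cancel]

theorem piTilde_val (n : ℕ) (i : Fin (n + 1)) :
    (piTilde (n + 1) i : ℕ) =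
      if 2 * (n - i) < n + 1 then 2 * (n - i) else 2 * (i : ℕ) + 1 := by
  rw [piTilde, Perm.mul_apply, sigmaTilde_val, Fin.revPerm_apply, Fin.val_rev]
  split_ifs <;> omega

theorem piTilde_mul_sigmaTilde_inv (n : ℕ) :
    piTilde (n + 1) * (sigmaTilde (n + 1))⁻¹ = adjSwaps 0 n := by
  rw [mul_inv_eq_iff_eq_mul]
  ext i
  rw [Perm.mul_apply, piTilde_val, adjSwaps_val, sigmaTilde_val, adjSwapFun]
  have := i.isLt
  split_ifs <;> omega

theorem piTilde_mul_finRotate_inv_mul_sigmaTilde_inv (n : ℕ) :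
    piTilde (n + 1) * (finRotate (n + 1))⁻¹ * (sigmaTilde (n + 1))⁻¹ = adjSwaps 1 n := by
  rw [mul_inv_eq_iff_eq_mul, mul_inv_eq_iff_eq_mul]
  ext i
  rw [Perm.mul_apply, Perm.mul_apply, piTilde_val, adjSwaps_val, sigmaTilde_val, adjSwapFun,
    coe_finRotate]
  simp only [Fin.ext_iff, Fin.val_last]
  have := i.isLt
  split_ifs <;> grind

/-- **Optimality of the criss-cross cycle.**  For `N ≥ 1`, nondecreasingly ordered red
points `r` and blue points `b` in ℝ, and a convex nondecreasing cost function `f` on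
`[0,∞)`, the criss-cross Hamiltonian cycle `(σ̃, π̃)` is optimal: every pair of
permutations `(σ, π)` has cost at least `E(σ̃, π̃)`. -/
theorem crisscross_optimal (N : ℕ) (hN : 1 ≤ N) (r b : Fin N → ℝ)
    (hr : Monotone r) (hb : Monotone b) (f : ℝ → ℝ)
    (hconv : ConvexOn ℝ (Set.Ici 0) f) (hmono : MonotoneOn f (Set.Ici 0))
    (σ π : Equiv.Perm (Fin N)) :
    cycleCost N r b f (sigmaTilde N) (piTilde N) ≤ cycleCost N r b f σ π := by
  obtain ⟨n, rfl⟩ : ∃ n, N = n + 1 := ⟨N - 1, by omega⟩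
  -- clamping the indices extends the cost matrix to a Monge array on `ℕ × ℕ`
  set F : ℕ → ℕ → ℝ := fun a c => f |r (Fin.clamp a n) - b (Fin.clamp c n)|
  have hF : IsMonge F := isMonge_of_convexOn (hconv.comp_abs hmono)
    (hr.comp Fin.clamp_monotone) (hb.comp Fin.clamp_monotone)
  have hFrb (i j : Fin (n + 1)) : F i j = f |r i - b j| := by
    have hclamp (k : Fin (n + 1)) : Fin.clamp k n = k := Fin.ext (by simp [k.is_le])
    simp only [F, hclamp]
  rw [cycleCost_eq_sum_add_sum hFrb, cycleCost_eq_sum_add_sum hFrb, piTilde_mul_sigmaTilde_inv,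
    piTilde_mul_finRotate_inv_mul_sigmaTilde_inv, sum_adjSwaps_zero_add_sum_adjSwaps_one]
  exact hF.two_mul_sum_diag_add_sum_swapGain_le σ π
end

section
/- Let N ≥ 1 and let σ, π ∈ S_N with σ(1)=1 be such that no pair of couples has opposite orientation, i.e., for all i, j ∈ {1,…,N}: (σ(τ(j)) − σ(i))·(π(j) − π(i)) ≥ 0 and (σ(j) − σ(i))·(π(j) − π(τ⁻¹(i))) ≥ 0. Then either (σ,π) = (σ̃, π̃) or (σ,π) = (σ̃∘τ∘I, π̃∘I). -/
/-!
The hypothesis says that `π i < π j` forces `σ (i + 1) ≤ σ j` and `σ i ≤ σ (j + 1)`. This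
relation is preserved by the involution `(σ, π) ↦ (σ ∘ τ ∘ I, π ∘ I)`, and `σ 0 = 0` forces `π` to
vanish at the last or at the first position; the involution exchanges the two cases. When `π`
vanishes at the last position, induction on `v` shows that `σ` and `σ̃`, and `π` and `π̃`, take
values below `v` at the same positions. Indeed, if `v` were not where `σ̃` (or `π̃`) puts it,
comparing that position with the one actually holding `v` would push a value below `v` to a
position where, by induction, only values `≥ v` sit.
-/

open Equiv

namespace CrissCross

section AgreeBelow

variable {m : ℕ} {σ τ : Perm (Fin m)}

def AgreeBelow (σ τ : Perm (Fin m)) (v : ℕ) : Prop :=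
  ∀ p, (σ p).val < v ↔ (τ p).val < v

lemma agreeBelow_of_le {v : ℕ} (hv : m ≤ v) : AgreeBelow σ τ v :=
  fun p => iff_of_true (by omega) (by omega)

lemma AgreeBelow.succ {v : ℕ} (h : AgreeBelow σ τ v) {s : Fin m}
    (hσ : (σ s).val = v) (hτ : (τ s).val = v) : AgreeBelow σ τ (v + 1) := by
  have eq_iff : ∀ ρ : Perm (Fin m), (ρ s).val = v → ∀ p, (ρ p).val = v ↔ p = s :=
    fun ρ hρ p => ⟨fun hp => ρ.injective (Fin.ext (hp.trans hρ.symm)), fun hp => hp ▸ hρ⟩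
  intro p
  rw [Nat.lt_succ_iff_lt_or_eq, Nat.lt_succ_iff_lt_or_eq, h p, eq_iff σ hσ, eq_iff τ hτ]

lemma eq_of_forall_agreeBelow (h : ∀ v, AgreeBelow σ τ v) : σ = τ :=
  Equiv.ext fun p => Fin.ext (eq_of_forall_gt_iff fun v => h v p)

end AgreeBelow

lemma val_apply_eq_val_apply_iff {m : ℕ} (σ : Perm (Fin m)) (p q : Fin m) :
    (σ p).val = (σ q).val ↔ p.val = q.val := by
  rw [Fin.val_inj, Fin.val_inj, σ.injective.eq_iff]

lemma revPerm_mul_revPerm {m : ℕ} : (Fin.revPerm : Perm (Fin m)) * Fin.revPerm = 1 := by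
  ext
  simp

variable {n : ℕ}

lemma val_add_one_cases (j : Fin (n + 1)) :
    j.val < n ∧ (j + 1).val = j.val + 1 ∨ j.val = n ∧ (j + 1).val = 0 := by
  rw [Fin.val_add_one]
  split_ifs with hj
  · exact Or.inr ⟨by simp [hj], rfl⟩
  · exact Or.inl ⟨Fin.val_lt_last hj, rfl⟩

lemma mk_add_one {a : ℕ} (ha : a < n) :
    (⟨a, by omega⟩ : Fin (n + 1)) + 1 = ⟨a + 1, by omega⟩ :=
  Fin.ext <| by
    have h := val_add_one_cases (⟨a, by omega⟩ : Fin (n + 1))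
    dsimp only at h ⊢
    omega

lemma rev_add_one_add_one (i : Fin (n + 1)) : Fin.rev (i + 1) + 1 = Fin.rev i := by
  rw [Fin.rev_add, sub_add_cancel]

lemma finRotate_mul_revPerm_mul_self :
    finRotate (n + 1) * Fin.revPerm * (finRotate (n + 1) * Fin.revPerm) = 1 := by
  ext x
  simp only [Perm.mul_apply, Fin.revPerm_apply, finRotate_apply, rev_add_one_add_one,
    Fin.rev_rev, Perm.one_apply]

lemma exists_apply_val_eq (σ : Perm (Fin (n + 1))) {v : ℕ} (hv : v ≤ n) :
    ∃ j, (σ j).val = v :=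
  ⟨σ.symm ⟨v, by omega⟩, by simp⟩

lemma exists_apply_add_one_val_eq (σ : Perm (Fin (n + 1))) {v : ℕ} (hv : v ≤ n) :
    ∃ j, (σ (j + 1)).val = v :=
  ⟨σ.symm ⟨v, by omega⟩ - 1, by simp⟩

lemma sigmaTilde_val (p : Fin (n + 1)) :
    (sigmaTilde (n + 1) p).val = min (2 * p.val) (2 * (n - p.val) + 1) := by
  unfold sigmaTilde
  simp only [Equiv.ofBijective_apply]
  split_ifs <;> dsimp only <;> omega

lemma piTilde_val (p : Fin (n + 1)) :
    (piTilde (n + 1) p).val = min (2 * (n - p.val)) (2 * p.val + 1) := by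
  rw [piTilde, Perm.mul_apply, sigmaTilde_val, Fin.revPerm_apply, Fin.val_rev]
  omega

def NoOppositePair (σ π : Perm (Fin (n + 1))) : Prop :=
  (∀ i j, π i < π j → σ (i + 1) ≤ σ j) ∧ ∀ i j, π i < π j → σ i ≤ σ (j + 1)

variable {σ π : Perm (Fin (n + 1))}

lemma noOppositePair_of_forall
    (h : ∀ i j : Fin (n + 1), (((σ (finRotate (n + 1) j)).val : ℤ) - (σ i).val) *
      (((π j).val : ℤ) - (π i).val) ≥ 0) :
    NoOppositePair σ π := by
  refine ⟨fun i j hij => ?_, fun i j hij => ?_⟩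
  · have := nonpos_of_mul_nonneg_left (h j i) (by omega)
    rw [finRotate_apply] at this
    omega
  · have := nonneg_of_mul_nonneg_left (h i j) (by omega)
    rw [finRotate_apply] at this
    omega

namespace NoOppositePair

lemma dual (h : NoOppositePair σ π) :
    NoOppositePair (σ * finRotate (n + 1) * Fin.revPerm) (π * Fin.revPerm) := by
  refine ⟨fun i j hij => ?_, fun i j hij => ?_⟩ <;>
  simp only [Perm.mul_apply, Fin.revPerm_apply, finRotate_apply, rev_add_one_add_one] at hij ⊢
  exacts [h.2 _ _ hij, h.1 _ _ hij]

lemma apply_last_eq_zero_or_apply_zero_eq_zero (h : NoOppositePair σ π) (hσ : σ 0 = 0) :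
    π (Fin.last n) = 0 ∨ π 0 = 0 := by
  obtain ⟨m, hm⟩ := π.surjective 0
  by_contra! hne
  have hlt : π m < π 0 := hm ▸ Fin.pos_iff_ne_zero.2 hne.2
  have hm1 : m + 1 = 0 := σ.injective (Fin.le_zero_iff.1 (hσ ▸ h.1 m 0 hlt) |>.trans hσ.symm)
  rw [← Fin.last_add_one, add_left_inj] at hm1
  exact hne.1 (hm1 ▸ hm)

variable {k : ℕ}

lemma sigma_val_odd (h : NoOppositePair σ π) (hk : 2 * k + 1 ≤ n)
    (hσ : AgreeBelow σ (sigmaTilde (n + 1)) (2 * k + 1))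
    (hπ : AgreeBelow π (piTilde (n + 1)) (2 * k + 1)) :
    (σ ⟨n - k, by omega⟩).val = 2 * k + 1 := by
  -- otherwise `σ (j + 1) < σ (n - k)`, so `π j ≤ π (n - k) < 2k + 1`, and then `σ (j + 1) < 2k + 1`
  obtain ⟨j, hj⟩ := exists_apply_add_one_val_eq σ hk
  have hsj := h.2 ⟨n - k, by omega⟩ j
  have hσs := hσ ⟨n - k, by omega⟩
  have hσj := hσ (j + 1)
  have hπs := hπ ⟨n - k, by omega⟩
  have hπj := hπ j
  have hj1 := val_add_one_cases j
  simp only [sigmaTilde_val, piTilde_val] at *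
  omega

lemma pi_val_odd (h : NoOppositePair σ π) (hk : 2 * k + 1 ≤ n)
    (hσ : AgreeBelow σ (sigmaTilde (n + 1)) (2 * k + 1))
    (hπ : AgreeBelow π (piTilde (n + 1)) (2 * k + 1)) :
    (π ⟨k, by omega⟩).val = 2 * k + 1 := by
  -- otherwise `π y < π k`, so `σ (y + 1) ≤ σ k < 2k + 1`, and then `π y < 2k + 1`
  obtain ⟨y, hy⟩ := exists_apply_val_eq π hk
  have hyt := h.1 y ⟨k, by omega⟩
  have hπt := hπ ⟨k, by omega⟩
  have hσt := hσ ⟨k, by omega⟩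
  have hσy := hσ (y + 1)
  have hπy := hπ y
  have hy1 := val_add_one_cases y
  simp only [sigmaTilde_val, piTilde_val] at *
  omega

lemma pi_val_even (h : NoOppositePair σ π) (hk : 2 * k + 2 ≤ n)
    (hσ : AgreeBelow σ (sigmaTilde (n + 1)) (2 * k + 2))
    (hπ : AgreeBelow π (piTilde (n + 1)) (2 * k + 2)) :
    (π ⟨n - k - 1, by omega⟩).val = 2 * k + 2 := by
  -- otherwise `π k < π y < π (n - k - 1)` gives `2k + 2 ≤ σ (k + 1) ≤ σ y ≤ σ (n - k) < 2k + 2`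
  obtain ⟨y, hy⟩ := exists_apply_val_eq π hk
  have hky := h.1 ⟨k, by omega⟩ y
  have hyt := h.2 y ⟨n - k - 1, by omega⟩
  rw [mk_add_one (by omega)] at hky hyt
  have hπk := hπ ⟨k, by omega⟩
  have hσk := hσ ⟨k + 1, by omega⟩
  have hπt := hπ ⟨n - k - 1, by omega⟩
  have hσt := hσ ⟨n - k - 1 + 1, by omega⟩
  have hπy := hπ y
  simp only [sigmaTilde_val, piTilde_val] at *
  omega

lemma sigma_val_even (h : NoOppositePair σ π) (hk : 2 * k + 2 ≤ n)
    (hσ : AgreeBelow σ (sigmaTilde (n + 1)) (2 * k + 2))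
    (hπ : AgreeBelow π (piTilde (n + 1)) (2 * k + 2))
    (hπt : (π ⟨n - k - 1, by omega⟩).val = 2 * k + 2) :
    (σ ⟨k + 1, by omega⟩).val = 2 * k + 2 := by
  -- otherwise `σ (n - k - 1) ≥ σ (k + 1) > 2k + 2`, while `π j > 2k + 2 = π (n - k - 1)`
  -- gives `σ (n - k - 1) ≤ σ (j + 1) = 2k + 2`
  obtain ⟨j, hj⟩ := exists_apply_add_one_val_eq σ hk
  have hkt := h.1 ⟨k, by omega⟩ ⟨n - k - 1, by omega⟩
  rw [mk_add_one (by omega)] at hkt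
  have htj := h.2 ⟨n - k - 1, by omega⟩ j
  have hπk := hπ ⟨k, by omega⟩
  have hσk := hσ ⟨k + 1, by omega⟩
  have hσj := hσ (j + 1)
  have hπj := hπ j
  have hσj' := val_apply_eq_val_apply_iff σ (j + 1) ⟨k + 1, by omega⟩
  have hπj' := val_apply_eq_val_apply_iff π j ⟨n - k - 1, by omega⟩
  have hj1 := val_add_one_cases j
  simp only [sigmaTilde_val, piTilde_val] at *
  omega

lemma exists_val_eq_of_agreeBelow (h : NoOppositePair σ π) (hσ0 : σ 0 = 0)
    (hπ0 : π (Fin.last n) = 0) {v : ℕ} (hv : v ≤ n)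
    (hσ : AgreeBelow σ (sigmaTilde (n + 1)) v) (hπ : AgreeBelow π (piTilde (n + 1)) v) :
    ∃ s t, (σ s).val = v ∧ (sigmaTilde (n + 1) s).val = v ∧
      (π t).val = v ∧ (piTilde (n + 1) t).val = v := by
  obtain rfl | ⟨k, rfl⟩ | ⟨k, rfl⟩ : v = 0 ∨ (∃ k, v = 2 * k + 1) ∨ ∃ k, v = 2 * k + 2 := by
    rcases Nat.even_or_odd' v with ⟨_ | k, rfl | rfl⟩
    · exact Or.inl rfl
    · exact Or.inr (Or.inl ⟨0, rfl⟩)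
    · exact Or.inr (Or.inr ⟨k, by ring⟩)
    · exact Or.inr (Or.inl ⟨k + 1, rfl⟩)
  · refine ⟨0, Fin.last n, by simp [hσ0], ?_, by simp [hπ0], ?_⟩ <;>
      simp only [sigmaTilde_val, piTilde_val, Fin.val_zero, Fin.val_last] <;> omega
  · refine ⟨_, _, h.sigma_val_odd hv hσ hπ, ?_, h.pi_val_odd hv hσ hπ, ?_⟩ <;>
      simp only [sigmaTilde_val, piTilde_val] <;> omega
  · have hπt := h.pi_val_even hv hσ hπ
    refine ⟨_, _, h.sigma_val_even hv hσ hπ hπt, ?_, hπt, ?_⟩ <;>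
      simp only [sigmaTilde_val, piTilde_val] <;> omega

theorem eq_crissCross (h : NoOppositePair σ π) (hσ0 : σ 0 = 0) (hπ0 : π (Fin.last n) = 0) :
    σ = sigmaTilde (n + 1) ∧ π = piTilde (n + 1) := by
  have agree : ∀ v, AgreeBelow σ (sigmaTilde (n + 1)) v ∧ AgreeBelow π (piTilde (n + 1)) v := by
    intro v
    induction v with
    | zero => exact ⟨fun p => by simp, fun p => by simp⟩
    | succ v ih =>
      by_cases hv : n < v
      · exact ⟨agreeBelow_of_le (by omega), agreeBelow_of_le (by omega)⟩
      obtain ⟨s, t, hσs, hσ's, hπt, hπ't⟩ :=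
        h.exists_val_eq_of_agreeBelow hσ0 hπ0 (by omega) ih.1 ih.2
      exact ⟨ih.1.succ hσs hσ's, ih.2.succ hπt hπ't⟩
  exact ⟨eq_of_forall_agreeBelow fun v => (agree v).1,
    eq_of_forall_agreeBelow fun v => (agree v).2⟩

end NoOppositePair

end CrissCross

open CrissCross

theorem crisscross_characterization_general (N : ℕ) (hN : 1 ≤ N) (σ π : Equiv.Perm (Fin N))
    (hσ1 : σ ⟨0, hN⟩ = ⟨0, hN⟩)
    (h1 : ∀ i j : Fin N,
      (((σ (finRotate N j)).val : ℤ) - ((σ i).val : ℤ)) *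
        (((π j).val : ℤ) - ((π i).val : ℤ)) ≥ 0) :
    (σ = sigmaTilde N ∧ π = piTilde N) ∨
    (σ = sigmaTilde N * finRotate N * Fin.revPerm ∧ π = piTilde N * Fin.revPerm) := by
  obtain ⟨n, rfl⟩ : ∃ n, N = n + 1 := ⟨N - 1, by omega⟩
  have hσ0 : σ 0 = 0 := hσ1
  have h := noOppositePair_of_forall h1
  rcases h.apply_last_eq_zero_or_apply_zero_eq_zero hσ0 with hπ0 | hπ0
  · exact Or.inl (h.eq_crissCross hσ0 hπ0)
  · obtain ⟨hσ', hπ'⟩ := h.dual.eq_crissCross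
      (by simpa only [Perm.mul_apply, Fin.revPerm_apply, Fin.rev_zero, finRotate_last] using hσ0)
      (by simpa only [Perm.mul_apply, Fin.revPerm_apply, Fin.rev_last] using hπ0)
    refine Or.inr ⟨?_, ?_⟩
    · rw [← hσ', mul_assoc _ (finRotate _), mul_assoc σ, mul_assoc σ,
        finRotate_mul_revPerm_mul_self, mul_one]
    · rw [← hπ', mul_assoc, revPerm_mul_revPerm, mul_one]

/-- **Characterization of cycles with no badly oriented pair.**  Let `N ≥ 1` and let
`σ, π ∈ S_N` with `σ(1) = 1` (0-indexed: `σ 0 = 0`) be such that no pair of couples has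
opposite orientation: for all `i, j`, `(σ(τ(j)) − σ(i))·(π(j) − π(i)) ≥ 0` and
`(σ(j) − σ(i))·(π(j) − π(τ⁻¹(i))) ≥ 0`, where `τ = finRotate N` is the left rotation.
Then `(σ,π)` is the criss-cross pair `(σ̃,π̃)` or its dual `(σ̃∘τ∘I, π̃∘I)`,
`I = Fin.revPerm` being the inversion. -/
theorem crisscross_characterization (N : ℕ) (hN : 1 ≤ N) (σ π : Equiv.Perm (Fin N))
    (hσ1 : σ ⟨0, hN⟩ = ⟨0, hN⟩)
    (h1 : ∀ i j : Fin N,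
      (((σ (finRotate N j)).val : ℤ) - ((σ i).val : ℤ)) *
        (((π j).val : ℤ) - ((π i).val : ℤ)) ≥ 0)
    (h2 : ∀ i j : Fin N,
      (((σ j).val : ℤ) - ((σ i).val : ℤ)) *
        (((π j).val : ℤ) - ((π ((finRotate N)⁻¹ i)).val : ℤ)) ≥ 0) :
    (σ = sigmaTilde N ∧ π = piTilde N) ∨
    (σ = sigmaTilde N * finRotate N * Fin.revPerm ∧ π = piTilde N * Fin.revPerm) :=
  crisscross_characterization_general N hN σ π hσ1 h1
end

section
/- Let f : [0,∞) → ℝ be convex and nondecreasing, and let a, b, c, d ∈ ℝ satisfy (d − a)(c − b) ≥ 0 (the couples (d,a) and (c,b) have the same orientation). Then f(|a − b|) + f(|c − d|) ≤ f(|a − c|) + f(|b − d|). -/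
/-!
Put `X = a - b`, `A = a - c`, `B = d - b`. The orientation hypothesis says exactly that `X` lies
between `A` and `B`, and `A + B - X = d - c`. The function `g = f ∘ |·|` is convex on all of `ℝ`,
and for a convex function `g X + g (A + B - X) ≤ g A + g B` whenever `X` lies between `A` and `B`:
the increments of a convex function over intervals of a fixed length grow to the right.
-/

open Set

section Increments

variable {𝕜 : Type*} [Field 𝕜] [LinearOrder 𝕜] [IsStrictOrderedRing 𝕜] {s : Set 𝕜} {f : 𝕜 → 𝕜}

theorem ConvexOn.map_add_sub_map_le (hf : ConvexOn 𝕜 s f) {x y h : 𝕜} (hx : x ∈ s)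
    (hyh : y + h ∈ s) (hxy : x ≤ y) (hh : 0 ≤ h) :
    f (x + h) - f x ≤ f (y + h) - f y := by
  rcases hh.eq_or_lt with rfl | hh
  · simp
  rcases hxy.eq_or_lt with rfl | hxy
  · rfl
  -- `x + h` and `y` split `[x, y + h]` in mirror-image proportions
  have hleft := hf.secant_mono_aux1 hx hyh (lt_add_of_pos_right x hh) (by linarith)
  have hright := hf.secant_mono_aux1 hx hyh hxy (lt_add_of_pos_right y hh)
  have hlen : 0 < y + h - x := by linarith
  nlinarith

theorem ConvexOn.map_add_map_sub_le (hf : ConvexOn 𝕜 s f) {a b x : 𝕜} (ha : a ∈ s) (hb : b ∈ s)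
    (hx : x ∈ uIcc a b) : f x + f (a + b - x) ≤ f a + f b := by
  wlog hab : a ≤ b generalizing a b
  · simpa only [add_comm a b, add_comm (f a)] using
      this hb ha (uIcc_comm a b ▸ hx) (le_of_not_ge hab)
  rw [uIcc_of_le hab] at hx
  have hsum : a + b - x + (x - a) = b := by ring
  have := hf.map_add_sub_map_le ha (hsum ▸ hb) (by linarith [hx.2]) (sub_nonneg.2 hx.1)
  rw [add_sub_cancel, hsum] at this
  linarith

end Increments

theorem ConvexOn.comp_norm {E : Type*} [SeminormedAddCommGroup E] [NormedSpace ℝ E] {f : ℝ → ℝ}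
    (hf : ConvexOn ℝ (Ici 0) f) (hf_mono : MonotoneOn f (Ici 0)) :
    ConvexOn ℝ univ (fun x : E => f ‖x‖) := by
  refine ⟨convex_univ, fun x _ y _ a b ha hb hab => ?_⟩
  calc f ‖a • x + b • y‖ ≤ f (a * ‖x‖ + b * ‖y‖) :=
        hf_mono (norm_nonneg _) (mem_Ici.2 (by positivity))
          ((convexOn_norm convex_univ).2 (mem_univ x) (mem_univ y) ha hb hab)
    _ ≤ a • f ‖x‖ + b • f ‖y‖ :=
        hf.2 (norm_nonneg x) (norm_nonneg y) ha hb hab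

/-- **Exchange (crossing) inequality.**  If `f : [0,∞) → ℝ` is convex and nondecreasing
and the couples `(d,a)` and `(c,b)` have the same orientation, i.e.
`(d − a)(c − b) ≥ 0`, then `f(|a − b|) + f(|c − d|) ≤ f(|a − c|) + f(|b − d|)`. -/
theorem exchange_inequality (f : ℝ → ℝ)
    (hconv : ConvexOn ℝ (Set.Ici 0) f) (hmono : MonotoneOn f (Set.Ici 0))
    (a b c d : ℝ) (h : (d - a) * (c - b) ≥ 0) :
    f |a - b| + f |c - d| ≤ f |a - c| + f |b - d| := by
  have hmem : a - b ∈ uIcc (a - c) (d - b) := by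
    rcases mul_nonneg_iff.mp h with ⟨hp, hq⟩ | ⟨hp, hq⟩
    · exact Icc_subset_uIcc ⟨by linarith, by linarith⟩
    · exact Icc_subset_uIcc' ⟨by linarith, by linarith⟩
  have key := (hconv.comp_norm hmono (E := ℝ)).map_add_map_sub_le (mem_univ _) (mem_univ _) hmem
  simp only [Real.norm_eq_abs] at key
  rwa [show a - c + (d - b) - (a - b) = -(c - d) by ring, abs_neg, abs_sub_comm d b] at key
end

section
/- Let N ≥ 2, let 1 ≤ i < j ≤ N, let σ, π ∈ S_N, and define σ', π' ∈ S_N by σ'(k) = σ(i+j+1−k) for i+1 ≤ k ≤ j, σ'(k) = σ(k) otherwise, and π'(k) = π(i+j−k) for i ≤ k ≤ j, π'(k) = π(k) otherwise (the reversal move R_{ij}). Then, writing σ(N+1) := σ(1), one has E(σ',π') − E(σ,π) = f(|r_{σ(i)} − b_{π(j)}|) + f(|r_{σ(j+1)} − b_{π(i)}|) − f(|r_{σ(i)} − b_{π(i)}|) − f(|r_{σ(j+1)} − b_{π(j)}|). In particular, if f is convex and nondecreasing and (r_{σ(j+1)} − r_{σ(i)})(b_{π(j)} − b_{π(i)}) ≥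 0, then E(σ',π') ≥ E(σ,π). -/
lemma frot_val {N : ℕ} (k : Fin N) : (finRotate N k).val = (k.val + 1) % N := by
  cases N with
  | zero => exact k.elim0
  | succ n =>
    rw [finRotate_succ_apply]
    simp [Fin.add_def]

lemma sum_reversal {M : Type*} [Fintype M] [DecidableEq M] (T T' : M → ℝ) (e : Equiv.Perm M)
    (i j : M) (hij : i ≠ j)
    (hz : ∀ k, k ≠ i → k ≠ j → T' (e k) = T k) :
    (∑ k, T' k) - (∑ k, T k) = (T' (e i) - T i) + (T' (e j) - T j) := by
  have h1 : (∑ k, T' k) = ∑ k, T' (e k) := (Equiv.sum_comp e T').symm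
  rw [h1, ← Finset.sum_sub_distrib]
  rw [← Finset.sum_subset (Finset.subset_univ ({i, j} : Finset M))
      (fun k _ hk => by
        simp only [Finset.mem_insert, Finset.mem_singleton] at hk
        push_neg at hk
        rw [hz k hk.1 hk.2, sub_self])]
  exact Finset.sum_pair hij

lemma convex_pair {f : ℝ → ℝ} (hf : ConvexOn ℝ (Set.Ici 0) f) {p q u s : ℝ}
    (hp : 0 ≤ p) (hpq : p ≤ q) (hqs : q ≤ s) (hpu : p ≤ u) (hus : u ≤ s)
    (hsum : q + u = p + s) : f q + f u ≤ f p + f s := by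
  rcases eq_or_lt_of_le (hpq.trans hqs) with h | h
  · have hq : q = p := le_antisymm (h ▸ hqs) hpq
    have hu : u = s := by linarith
    rw [hq, hu]
  · set l : ℝ := (s - q) / (s - p) with hl
    have h0 : (0:ℝ) < s - p := by linarith
    have hl0 : 0 ≤ l := div_nonneg (by linarith) h0.le
    have hl1 : l ≤ 1 := by rw [div_le_one h0]; linarith
    have hs : (0:ℝ) ≤ s := le_trans hp (le_trans hpq hqs)
    have hmul : l * (s - p) = s - q := div_mul_cancel₀ _ h0.ne'
    have e1 : q = l * p + (1 - l) * s := by linear_combination hmul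
    have e2 : u = (1 - l) * p + l * s := by linear_combination hsum - hmul
    have c1 : f (l * p + (1 - l) * s) ≤ l * f p + (1 - l) * f s :=
      hf.2 (Set.mem_Ici.mpr hp) (Set.mem_Ici.mpr hs) hl0 (by linarith) (by ring)
    have c2 : f ((1 - l) * p + l * s) ≤ (1 - l) * f p + l * f s :=
      hf.2 (Set.mem_Ici.mpr hp) (Set.mem_Ici.mpr hs) (by linarith) hl0 (by ring)
    rw [e1, e2]
    nlinarith [c1, c2]

lemma submaj_aux {f : ℝ → ℝ} (hf : ConvexOn ℝ (Set.Ici 0) f)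
    (hm : MonotoneOn f (Set.Ici 0)) {a b c d : ℝ}
    (hb : 0 ≤ b) (hd : 0 ≤ d) (hba : b ≤ a) (hdc : d ≤ c)
    (hsum : c + d ≤ a + b) (hca : c ≤ a) : f c + f d ≤ f a + f b := by
  rcases le_or_gt 0 (c + d - a) with ht | ht
  · have h1 : f c + f d ≤ f (c + d - a) + f a :=
      (add_comm (f c) (f d)) ▸ convex_pair hf ht (by linarith) (by linarith) (by linarith) hca (by ring)
    have h2 : f (c + d - a) ≤ f b := hm (Set.mem_Ici.mpr ht) (Set.mem_Ici.mpr hb) (by linarith)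
    linarith
  · have hc0 : 0 ≤ c := le_trans hd hdc
    have h1 : f c + f d ≤ f 0 + f (c + d) :=
      (add_comm (f c) (f d)) ▸ convex_pair hf le_rfl hd (by linarith) hc0 (by linarith) (by ring)
    have h2 : f (c + d) ≤ f a := hm (Set.mem_Ici.mpr (by linarith)) (Set.mem_Ici.mpr (by linarith)) (by linarith)
    have h3 : f 0 ≤ f b := hm (Set.mem_Ici.mpr le_rfl) (Set.mem_Ici.mpr hb) hb
    linarith

lemma submaj {f : ℝ → ℝ} (hf : ConvexOn ℝ (Set.Ici 0) f)
    (hm : MonotoneOn f (Set.Ici 0)) {a b c d : ℝ}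
    (ha : 0 ≤ a) (hb : 0 ≤ b) (hc : 0 ≤ c) (hd : 0 ≤ d)
    (hsum : c + d ≤ a + b) (hcm : c ≤ max a b) (hdm : d ≤ max a b) :
    f c + f d ≤ f a + f b := by
  rcases le_total b a with h1 | h1 <;> rcases le_total d c with h2 | h2
  · exact submaj_aux hf hm hb hd h1 h2 hsum (by simpa [max_eq_left h1] using hcm)
  · have := submaj_aux hf hm hb hc h1 h2 (by linarith) (by simpa [max_eq_left h1] using hdm)
    linarith
  · have := submaj_aux hf hm ha hd h1 h2 (by linarith) (by simpa [max_eq_right h1] using hcm)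
    linarith
  · have := submaj_aux hf hm ha hc h1 h2 (by linarith) (by simpa [max_eq_right h1] using hdm)
    linarith

lemma key_ineq {f : ℝ → ℝ} (hf : ConvexOn ℝ (Set.Ici 0) f)
    (hm : MonotoneOn f (Set.Ici 0)) {x X β B : ℝ} (hx : x ≤ X) (hβ : β ≤ B) :
    f |x - β| + f |X - B| ≤ f |x - B| + f |X - β| := by
  apply submaj hf hm (abs_nonneg _) (abs_nonneg _) (abs_nonneg _) (abs_nonneg _)
  · rcases abs_cases (x - β) with ⟨e1, s1⟩ | ⟨e1, s1⟩ <;>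
    rcases abs_cases (X - B) with ⟨e2, s2⟩ | ⟨e2, s2⟩ <;>
    rcases abs_cases (x - B) with ⟨e3, s3⟩ | ⟨e3, s3⟩ <;>
    rcases abs_cases (X - β) with ⟨e4, s4⟩ | ⟨e4, s4⟩ <;> linarith
  · rcases le_total β x with h | h
    · refine le_max_of_le_right ?_
      calc |x - β| = x - β := abs_of_nonneg (by linarith)
        _ ≤ X - β := by linarith
        _ ≤ |X - β| := le_abs_self _
    · refine le_max_of_le_left ?_
      calc |x - β| = β - x := by rw [abs_sub_comm]; exact abs_of_nonneg (by linarith)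
        _ ≤ B - x := by linarith
        _ ≤ |x - B| := by rw [abs_sub_comm]; exact le_abs_self _
  · rcases le_total X B with h | h
    · refine le_max_of_le_left ?_
      calc |X - B| = B - X := by rw [abs_sub_comm]; exact abs_of_nonneg (by linarith)
        _ ≤ B - x := by linarith
        _ ≤ |x - B| := by rw [abs_sub_comm]; exact le_abs_self _
    · refine le_max_of_le_right ?_
      calc |X - B| = X - B := abs_of_nonneg (by linarith)
        _ ≤ X - β := by linarith
        _ ≤ |X - β| := le_abs_self _

/-- **The reversal move `R_{ij}`.**  Let `N ≥ 2`, `1 ≤ i < j ≤ N` (0-indexed: `i < j` in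
`Fin N`), and let `σ', π'` be obtained from `(σ,π)` by the move `R_{ij}`, i.e. (1-indexed)
`σ'(k) = σ(i+j+1−k)` for `i+1 ≤ k ≤ j`, `π'(k) = π(i+j−k)` for `i ≤ k ≤ j`, and
`σ' = σ`, `π' = π` elsewhere.  (0-indexed: `σ' k = σ (i+j+1-k)` for `i < k ≤ j` and
`π' k = π (i+j-k)` for `i ≤ k ≤ j`.)  Then, with `σ(j+1)` read cyclically
(`σ(j+1) = σ(τ(j))`, `τ = finRotate N`),
`E(σ',π') − E(σ,π) = f(|r_{σ(i)} − b_{π(j)}|) + f(|r_{σ(j+1)} − b_{π(i)}|)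
− f(|r_{σ(i)} − b_{π(i)}|) − f(|r_{σ(j+1)} − b_{π(j)}|)`;
in particular if `f` is convex and nondecreasing on `[0,∞)` and the couples
`(r_{σ(j+1)}, r_{σ(i)})` and `(b_{π(j)}, b_{π(i)})` have the same orientation, then
`E(σ',π') ≥ E(σ,π)`. -/
theorem reversal_move_cost (N : ℕ) (hN : 2 ≤ N) (r b : Fin N → ℝ)
    (hr : Monotone r) (hb : Monotone b) (f : ℝ → ℝ)
    (i j : Fin N) (hij : i < j) (σ π σ' π' : Equiv.Perm (Fin N))
    (hσ'₁ : ∀ k : Fin N, ∀ _ : i.val < k.val, ∀ _ : k.val ≤ j.val,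
      σ' k = σ ⟨i.val + j.val + 1 - k.val, by have := j.isLt; omega⟩)
    (hσ'₂ : ∀ k : Fin N, ¬(i.val < k.val ∧ k.val ≤ j.val) → σ' k = σ k)
    (hπ'₁ : ∀ k : Fin N, ∀ _ : i.val ≤ k.val, ∀ _ : k.val ≤ j.val,
      π' k = π ⟨i.val + j.val - k.val, by have := j.isLt; omega⟩)
    (hπ'₂ : ∀ k : Fin N, ¬(i.val ≤ k.val ∧ k.val ≤ j.val) → π' k = π k) :
    cycleCost N r b f σ' π' - cycleCost N r b f σ π
      = f |r (σ i) - b (π j)| + f |r (σ (finRotate N j)) - b (π i)|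
        - f |r (σ i) - b (π i)| - f |r (σ (finRotate N j)) - b (π j)| ∧
    (ConvexOn ℝ (Set.Ici 0) f → MonotoneOn f (Set.Ici 0) →
      (r (σ (finRotate N j)) - r (σ i)) * (b (π j) - b (π i)) ≥ 0 →
      cycleCost N r b f σ π ≤ cycleCost N r b f σ' π') := by
  have hjN := j.isLt
  have hijv : i.val < j.val := hij
  have hi1 : i.val + 1 < N := by omega
  have hinv : Function.Involutive (fun k : Fin N =>
      if h : i.val < k.val ∧ k.val < j.val then (⟨i.val + j.val - k.val, by omega⟩ : Fin N)
      else k) := by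
    intro k
    by_cases h : i.val < k.val ∧ k.val < j.val
    · simp only [dif_pos h]
      have h2 : i.val < i.val + j.val - k.val ∧ i.val + j.val - k.val < j.val := by omega
      simp only [dif_pos h2]
      exact Fin.ext (by omega : i.val + j.val - (i.val + j.val - k.val) = k.val)
    · simp only [dif_neg h]
  set e : Equiv.Perm (Fin N) := Function.Involutive.toPerm _ hinv with he
  have hek : ∀ k : Fin N, e k =
      if h : i.val < k.val ∧ k.val < j.val then (⟨i.val + j.val - k.val, by omega⟩ : Fin N)
      else k := fun k => rfl
  have hrot : ∀ (k : Fin N) (hk : k.val + 1 < N), finRotate N k = ⟨k.val + 1, hk⟩ :=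
    fun k hk => Fin.ext (by rw [frot_val]; exact Nat.mod_eq_of_lt hk)
  have hπ'i : π' i = π j := by
    rw [hπ'₁ i le_rfl hijv.le]
    exact congrArg π (Fin.ext (by omega : i.val + j.val - i.val = j.val))
  have hσ'i : σ' i = σ i := hσ'₂ i (by omega)
  have hτi : finRotate N i = ⟨i.val + 1, hi1⟩ := hrot i hi1
  have hσ'τi : σ' (finRotate N i) = σ j := by
    rw [hτi, hσ'₁ ⟨i.val + 1, hi1⟩ (by omega : i.val < i.val + 1) (by omega : i.val + 1 ≤ j.val)]
    exact congrArg σ (Fin.ext (by omega : i.val + j.val + 1 - (i.val + 1) = j.val))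
  have hπ'j : π' j = π i := by
    rw [hπ'₁ j hijv.le le_rfl]
    exact congrArg π (Fin.ext (by omega : i.val + j.val - j.val = i.val))
  have hσ'j : σ' j = σ ⟨i.val + 1, hi1⟩ := by
    rw [hσ'₁ j hijv le_rfl]
    exact congrArg σ (Fin.ext (by omega : i.val + j.val + 1 - j.val = i.val + 1))
  have hσ'τj : σ' (finRotate N j) = σ (finRotate N j) := by
    apply hσ'₂
    rw [frot_val]
    rcases Nat.lt_or_ge (j.val + 1) N with h | h
    · rw [Nat.mod_eq_of_lt h]; omega
    · have hjn : j.val + 1 = N := by omega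
      rw [hjn, Nat.mod_self]; omega
  have hei : e i = i := by
    rw [hek]; exact dif_neg (by omega : ¬(i.val < i.val ∧ i.val < j.val))
  have hej : e j = j := by
    rw [hek]; exact dif_neg (by omega : ¬(i.val < j.val ∧ j.val < j.val))
  have hzz : ∀ k : Fin N, k ≠ i → k ≠ j →
      (fun k => f |r (σ' k) - b (π' k)| + f |r (σ' (finRotate N k)) - b (π' k)|) (e k)
        = (fun k => f |r (σ k) - b (π k)| + f |r (σ (finRotate N k)) - b (π k)|) k := by
    intro k hki hkj
    simp only
    have hki' : k.val ≠ i.val := fun h => hki (Fin.ext h)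
    have hkj' : k.val ≠ j.val := fun h => hkj (Fin.ext h)
    by_cases hmid : i.val < k.val ∧ k.val < j.val
    · have hk1 : k.val + 1 < N := by omega
      have hekm : e k = ⟨i.val + j.val - k.val, by omega⟩ := by
        rw [hek]; exact dif_pos hmid
      rw [hekm]
      have hπ'm : π' ⟨i.val + j.val - k.val, by omega⟩ = π k := by
        rw [hπ'₁ _ (by omega : i.val ≤ i.val + j.val - k.val)
          (by omega : i.val + j.val - k.val ≤ j.val)]
        exact congrArg π (Fin.ext (by omega : i.val + j.val - (i.val + j.val - k.val) = k.val))
      have hσ'm : σ' ⟨i.val + j.val - k.val, by omega⟩ = σ ⟨k.val + 1, hk1⟩ := by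
        rw [hσ'₁ _ (by omega : i.val < i.val + j.val - k.val)
          (by omega : i.val + j.val - k.val ≤ j.val)]
        exact congrArg σ (Fin.ext (by omega : i.val + j.val + 1 - (i.val + j.val - k.val) = k.val + 1))
      have hm1 : (i.val + j.val - k.val) + 1 < N := by omega
      have hσ'τm : σ' (finRotate N ⟨i.val + j.val - k.val, by omega⟩) = σ k := by
        rw [hrot _ hm1, hσ'₁ _ (by omega : i.val < i.val + j.val - k.val + 1)
          (by omega : i.val + j.val - k.val + 1 ≤ j.val)]
        exact congrArg σ (Fin.ext (by omega : i.val + j.val + 1 - (i.val + j.val - k.val + 1) = k.val))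
      have hτk : finRotate N k = ⟨k.val + 1, hk1⟩ := hrot k hk1
      rw [hπ'm, hσ'm, hσ'τm, hτk]
      ring
    · have hekk : e k = k := by rw [hek]; exact dif_neg hmid
      rw [hekk, hπ'₂ k (by omega), hσ'₂ k (by omega)]
      have hσ'τk : σ' (finRotate N k) = σ (finRotate N k) := by
        apply hσ'₂
        rw [frot_val]
        rcases Nat.lt_or_ge (k.val + 1) N with h | h
        · rw [Nat.mod_eq_of_lt h]; omega
        · have hkn : k.val + 1 = N := by have := k.isLt; omega
          rw [hkn, Nat.mod_self]; omega
      rw [hσ'τk]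
  have main := sum_reversal
    (fun k => f |r (σ k) - b (π k)| + f |r (σ (finRotate N k)) - b (π k)|)
    (fun k => f |r (σ' k) - b (π' k)| + f |r (σ' (finRotate N k)) - b (π' k)|)
    e i j hij.ne hzz
  simp only [hei, hej] at main
  have heq : cycleCost N r b f σ' π' - cycleCost N r b f σ π
      = f |r (σ i) - b (π j)| + f |r (σ (finRotate N j)) - b (π i)|
        - f |r (σ i) - b (π i)| - f |r (σ (finRotate N j)) - b (π j)| := by
    unfold cycleCost
    rw [main, hπ'i, hσ'i, hσ'τi, hπ'j, hσ'j, hσ'τj, hτi]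
    ring
  refine ⟨heq, fun hcv hmono hor => ?_⟩
  rcases mul_nonneg_iff.mp hor with ⟨h1, h2⟩ | ⟨h1, h2⟩
  · have := key_ineq hcv hmono (by linarith : r (σ i) ≤ r (σ (finRotate N j)))
      (by linarith : b (π i) ≤ b (π j))
    linarith
  · have := key_ineq hcv hmono (by linarith : r (σ (finRotate N j)) ≤ r (σ i))
      (by linarith : b (π j) ≤ b (π i))
    linarith
end

section
/- For every N ≥ 1, every function w : {1,…,N} × {1,…,N} → ℝ, and every pair of permutations σ, π ∈ S_N, the cost of the Hamiltonian cycle encoded by (σ,π) is at least twice the optimal assignment cost: Σ_{i=1}^N [ w(σ(i), π(i)) + w(σ(τ(i)), π(i)) ] ≥ 2 · min_{λ ∈ S_N} Σ_{i=1}^N w(i, λ(i)). In particular the optimal bipartite TSP cost on K_{N,N} is at least twice the optimal assignment cost on the same weighted graph. -/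
lemma assignment_le (N : ℕ) (w : Fin N → Fin N → ℝ) (a b : Equiv.Perm (Fin N)) :
    (⨅ lam : Equiv.Perm (Fin N), ∑ i : Fin N, w i (lam i)) ≤
      ∑ i : Fin N, w (a i) (b i) := by
  have h : ∑ i : Fin N, w (a i) (b i)
      = ∑ i : Fin N, w i ((b * a⁻¹ : Equiv.Perm (Fin N)) i) := by
    rw [← Equiv.sum_comp a (fun i => w i ((b * a⁻¹ : Equiv.Perm (Fin N)) i))]
    simp
  rw [h]
  exact ciInf_le (Finite.bddBelow_range _) _

/-- **The TSP cost is at least twice the optimal assignment cost.**  For every `N ≥ 1`,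
weights `w` on `K_{N,N}`, and permutations `σ, π ∈ S_N` (encoding a Hamiltonian cycle,
`τ = finRotate N` being the left rotation), the cost of the Hamiltonian cycle is at
least twice the minimal assignment cost `min_{λ ∈ S_N} Σ_i w(i, λ(i))`.  In particular
the optimal bipartite TSP cost is at least twice the optimal assignment cost. -/
theorem cycle_cost_ge_two_assignment (N : ℕ) (hN : 1 ≤ N) (w : Fin N → Fin N → ℝ)
    (σ π : Equiv.Perm (Fin N)) :
    ∑ i : Fin N, (w (σ i) (π i) + w (σ (finRotate N i)) (π i))
      ≥ 2 * ⨅ lam : Equiv.Perm (Fin N), ∑ i : Fin N, w i (lam i) := by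
  rw [Finset.sum_add_distrib]
  have h1 := assignment_le N w σ π
  have h2 := assignment_le N w (σ * (finRotate N : Equiv.Perm (Fin N))) π
  simp only [Equiv.Perm.mul_apply] at h2
  linarith
end

section
/- For every odd N ≥ 1, the criss-cross permutation σ̃ satisfies I∘σ̃∘I = σ̃∘τ^{−(N−1)/2}, and consequently I∘π̃∘I = π̃∘τ^{(N−1)/2}. -/
lemma finRotate_pow_val {n : ℕ} (k : ℕ) : ∀ i : Fin n,
    (((finRotate n) ^ k) i).val = (i.val + k) % n := by
  cases n with
  | zero => exact fun i => i.elim0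
  | succ n =>
    induction k with
    | zero => intro i; simp [Nat.mod_eq_of_lt i.isLt]
    | succ k ih =>
      intro i
      rw [pow_succ, Equiv.Perm.mul_apply, finRotate_succ_apply, ih (i + 1), Fin.val_add,
        Fin.val_one', Nat.mod_add_mod]
      rcases Nat.eq_zero_or_pos n with h | h
      · subst h; omega
      · rw [show (1 : ℕ) % (n + 1) = 1 from Nat.mod_eq_of_lt (by omega)]
        congr 1
        omega

/-- **Conjugation of the criss-cross permutations by the inversion (odd `N`).**
For odd `N ≥ 1`, `I∘σ̃∘I = σ̃∘τ^{−(N−1)/2}` and consequently `I∘π̃∘I = π̃∘τ^{(N−1)/2}`,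
where `τ = finRotate N` is the left rotation and `I = Fin.revPerm` the inversion.
(Here `(f * g) i = f (g i)`.) -/

theorem inversion_conjugation_crisscross (N : ℕ) (hN : 1 ≤ N) (hodd : Odd N) :
    (Fin.revPerm : Equiv.Perm (Fin N)) * sigmaTilde N * Fin.revPerm
        = sigmaTilde N * ((finRotate N)⁻¹) ^ ((N - 1) / 2) ∧
    (Fin.revPerm : Equiv.Perm (Fin N)) * piTilde N * Fin.revPerm
        = piTilde N * (finRotate N) ^ ((N - 1) / 2) := by
  obtain ⟨m, hm⟩ := hodd
  have hm2 : (N - 1) / 2 = m := by omega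
  rw [hm2]
  constructor
  · rw [inv_pow, eq_mul_inv_iff_mul_eq]
    refine Equiv.ext fun i => Fin.ext ?_
    simp only [Equiv.Perm.mul_apply, Fin.revPerm_apply]
    rw [show ((finRotate N ^ m) i) = ⟨(i.val + m) % N, Nat.mod_lt _ (by omega)⟩ from
      Fin.ext (finRotate_pow_val m i)]
    have hi := i.isLt
    simp only [sigmaTilde, Equiv.ofBijective_apply, Fin.val_rev]
    rcases Nat.lt_or_ge (i.val + m) N with hc | hc
    · have hmod : (i.val + m) % N = i.val + m := Nat.mod_eq_of_lt hc
      split_ifs <;> simp only [Fin.val_rev] <;> omega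
    · have hmod : (i.val + m) % N = i.val + m - N := by
        rw [Nat.mod_eq_sub_mod hc]; exact Nat.mod_eq_of_lt (by omega)
      split_ifs <;> simp only [Fin.val_rev] <;> omega
  · refine Equiv.ext fun i => Fin.ext ?_
    simp only [piTilde, Equiv.Perm.mul_apply, Fin.revPerm_apply, Fin.rev_rev]
    rw [show ((finRotate N ^ m) i) = ⟨(i.val + m) % N, Nat.mod_lt _ (by omega)⟩ from
      Fin.ext (finRotate_pow_val m i)]
    have hi := i.isLt
    simp only [sigmaTilde, Equiv.ofBijective_apply, Fin.val_rev]
    rcases Nat.lt_or_ge (i.val + m) N with hc | hc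
    · have hmod : (i.val + m) % N = i.val + m := Nat.mod_eq_of_lt hc
      split_ifs <;> simp only [Fin.val_rev] <;> omega
    · have hmod : (i.val + m) % N = i.val + m - N := by
        rw [Nat.mod_eq_sub_mod hc]; exact Nat.mod_eq_of_lt (by omega)
      split_ifs <;> simp only [Fin.val_rev] <;> omega
end

section
/- Let μ̃₁ = π̃∘σ̃⁻¹ and μ̃₂ = π̃∘τ⁻¹∘σ̃⁻¹ be the two matching permutations of the criss-cross cycle. If N is odd, then μ̃₁ and μ̃₂ each have exactly one fixed point (so each consists of (N−1)/2 transpositions and one fixed point). If N is even, then μ̃₁ has no fixed points and μ̃₂ has exactly two fixed points. -/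
/-! Both matchings are conjugate by `σ̃`: `μ̃₁ = σ̃ I σ̃⁻¹` and `μ̃₂ = σ̃ (I τ⁻¹) σ̃⁻¹`, so it suffices
to count the fixed points of `I : i ↦ N - 1 - i`, the solutions of `2i + 1 = N`, and of
`I τ⁻¹ : i ↦ -i (mod N)`, the solutions of `2i ≡ 0 (mod N)`. -/

open Finset

theorem Equiv.Perm.card_fixedPoints_conj {α : Type*} [Fintype α] [DecidableEq α]
    (f g : Equiv.Perm α) :
    #{x | (g * f * g⁻¹) x = x} = #{x | f x = x} :=
  Finset.card_equiv g.symm fun x => by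
    simp [Equiv.Perm.mul_apply, Equiv.Perm.inv_def, ← Equiv.eq_symm_apply]

theorem Fin.revPerm_apply_eq_self_iff {N : ℕ} (i : Fin N) :
    Fin.revPerm i = i ↔ 2 * i.val + 1 = N := by
  rw [Fin.revPerm_apply, Fin.ext_iff, Fin.val_rev]
  omega

theorem Fin.card_fixedPoints_revPerm (N : ℕ) : #{i : Fin N | Fin.revPerm i = i} = N % 2 := by
  simp only [Fin.revPerm_apply_eq_self_iff]
  obtain ⟨k, rfl | rfl⟩ := Nat.even_or_odd' N
  · rw [Nat.mul_mod_right, Finset.card_eq_zero, Finset.filter_eq_empty_iff]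
    omega
  · rw [Nat.mul_add_mod_self_left, Finset.card_eq_one]
    refine ⟨⟨k, by omega⟩, ?_⟩
    ext i
    simp only [mem_filter, mem_univ, true_and, mem_singleton, Fin.ext_iff]
    omega

theorem Fin.revPerm_mul_finRotate_inv_apply_eq_self_iff {N : ℕ} (i : Fin N) :
    (Fin.revPerm * (finRotate N)⁻¹ : Equiv.Perm (Fin N)) i = i ↔ i.val = 0 ∨ 2 * i.val = N := by
  obtain ⟨n, rfl⟩ := Nat.exists_eq_succ_of_ne_zero i.pos.ne'
  rw [Equiv.Perm.mul_apply, Equiv.Perm.inv_def, Fin.revPerm_apply, Fin.ext_iff, Fin.val_rev]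
  rcases eq_or_ne i 0 with rfl | hi
  · simp
  · have := Fin.val_ne_zero_iff.mpr hi
    rw [coe_finRotate_symm_of_ne_zero hi]
    omega

theorem Fin.card_fixedPoints_revPerm_mul_finRotate_inv (N : ℕ) (hN : 0 < N) :
    #{i : Fin N | (Fin.revPerm * (finRotate N)⁻¹ : Equiv.Perm (Fin N)) i = i} = 2 - N % 2 := by
  simp only [Fin.revPerm_mul_finRotate_inv_apply_eq_self_iff]
  obtain ⟨k, rfl | rfl⟩ := Nat.even_or_odd' N
  · rw [Nat.mul_mod_right, Finset.card_eq_two]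
    refine ⟨⟨0, hN⟩, ⟨k, by omega⟩, by simp [Fin.ext_iff]; omega, ?_⟩
    ext i
    simp only [mem_filter, mem_univ, true_and, mem_insert, mem_singleton, Fin.ext_iff]
    omega
  · rw [Nat.mul_add_mod_self_left, Finset.card_eq_one]
    refine ⟨⟨0, hN⟩, ?_⟩
    ext i
    simp only [mem_filter, mem_univ, true_and, mem_singleton, Fin.ext_iff]
    omega

/-- **Fixed points of the two criss-cross matchings.**  Let `μ̃₁ = π̃∘σ̃⁻¹` and
`μ̃₂ = π̃∘τ⁻¹∘σ̃⁻¹` (with `τ = finRotate N` the left rotation).  If `N` is odd, then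
`μ̃₁` and `μ̃₂` each have exactly one fixed point (so, being involutions, each consists
of `(N−1)/2` transpositions and one fixed point).  If `N` is even, then `μ̃₁` has no
fixed points and `μ̃₂` has exactly two. -/
theorem crisscross_matchings_fixed_points (N : ℕ) (hN : 1 ≤ N) :
    (Odd N →
      (Finset.univ.filter fun i : Fin N => (piTilde N * (sigmaTilde N)⁻¹) i = i).card = 1 ∧
      (Finset.univ.filter fun i : Fin N =>
        (piTilde N * (finRotate N)⁻¹ * (sigmaTilde N)⁻¹) i = i).card = 1) ∧
    (Even N →
      (Finset.univ.filter fun i : Fin N => (piTilde N * (sigmaTilde N)⁻¹) i = i).card = 0 ∧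
      (Finset.univ.filter fun i : Fin N =>
        (piTilde N * (finRotate N)⁻¹ * (sigmaTilde N)⁻¹) i = i).card = 2) := by
  have hμ₁ : piTilde N * (sigmaTilde N)⁻¹ = sigmaTilde N * Fin.revPerm * (sigmaTilde N)⁻¹ := rfl
  have hμ₂ : piTilde N * (finRotate N)⁻¹ * (sigmaTilde N)⁻¹
      = sigmaTilde N * (Fin.revPerm * (finRotate N)⁻¹) * (sigmaTilde N)⁻¹ := by
    simp only [piTilde, mul_assoc]
  simp only [hμ₁, hμ₂, Equiv.Perm.card_fixedPoints_conj, Fin.card_fixedPoints_revPerm,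
    Fin.card_fixedPoints_revPerm_mul_finRotate_inv N hN, Nat.odd_iff, Nat.even_iff]
  omega
end

section
/- For every N ≥ 2, the average cost of the optimal (criss-cross) Hamiltonian cycle of the bipartite Euclidean TSP in one dimension with cost exponent p = 2 and uniformly distributed points equals E[E_N^{(2)}] = (2/3) · (N² + 4N − 3) / (N+1)². -/
open MeasureTheory

/-- The law of a pair of two independent samples of `N` i.i.d. points uniformly
distributed on `[0,1]` (red sample, blue sample). -/
noncomputable def unifPair (N : ℕ) : Measure ((Fin N → ℝ) × (Fin N → ℝ)) :=
  (Measure.pi fun _ : Fin N => volume.restrict (Set.Icc (0:ℝ) 1)).prod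
    (Measure.pi fun _ : Fin N => volume.restrict (Set.Icc (0:ℝ) 1))

/-- The increasing order statistics of a finite sample `x`. -/
noncomputable def orderStat {N : ℕ} (x : Fin N → ℝ) : Fin N → ℝ := x ∘ Tuple.sort x

/-- The cost `E_N^{(2)}` of the optimal (criss-cross) bipartite TSP cycle with cost
exponent `p = 2`:  `E_N^{(2)} = (r₁−b₁)² + (r_N−b_N)² + Σ_{k=1}^{N−1} [(b_{k+1}−r_k)²
+ (r_{k+1}−b_k)²]`, where `r` and `b` are the increasing order statistics of the two
samples (0-indexed below). -/
noncomputable def crisscrossCostSq (N : ℕ) (hN : 1 ≤ N) (q : (Fin N → ℝ) × (Fin N → ℝ)) : ℝ :=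
  (orderStat q.1 ⟨0, hN⟩ - orderStat q.2 ⟨0, hN⟩) ^ 2
  + (orderStat q.1 ⟨N - 1, by omega⟩ - orderStat q.2 ⟨N - 1, by omega⟩) ^ 2
  + ∑ k : Fin (N - 1),
      ((orderStat q.2 ⟨k.val + 1, by have := k.isLt; omega⟩
          - orderStat q.1 ⟨k.val, by have := k.isLt; omega⟩) ^ 2
       + (orderStat q.1 ⟨k.val + 1, by have := k.isLt; omega⟩
          - orderStat q.2 ⟨k.val, by have := k.isLt; omega⟩) ^ 2)

/-!
Expanding the squares, every point is an endpoint of exactly two edges of the criss-cross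
cycle, so `E_N = 2 ∑ rᵢ² + 2 ∑ bᵢ² - 2 ∑_{edges} r b`. The sums of squares are sums over the
unsorted samples and have mean `N/3` each. By independence of the two samples each edge term
has mean `E rᵢ · E bⱼ`, and the `k`-th smallest of `N` uniform points has mean `k/(N+1)`: by
the layer-cake formula it is `∫₀¹ P(r_k ≥ t) dt`, where `r_k ≥ t` means that at most `k - 1`
points fall below `t`, a binomial event whose terms integrate (Beta integrals) to `1/(N+1)`
each. Summing `k(k+1)` over the inner edges gives the closed form.
-/

open Finset Nat

theorem integral_pow_mul_one_sub_pow (a b : ℕ) :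
    ∫ t in (0:ℝ)..1, t ^ a * (1 - t) ^ b = (a ! * b ! : ℝ) / (a + b + 1)! := by
  have h := Complex.betaIntegral_eq_Gamma_mul_div (a + 1) (b + 1)
    (by simp; positivity) (by simp; positivity)
  simp only [Complex.betaIntegral, add_sub_cancel_right, Complex.cpow_natCast] at h
  rw [← Complex.ofReal_inj, ← intervalIntegral.integral_ofReal]
  push_cast
  rw [h, show (a : ℂ) + 1 + (b + 1) = ((a + b + 1 : ℕ) : ℂ) + 1 by push_cast; ring]
  simp only [Complex.Gamma_nat_eq_factorial]

theorem integral_choose_mul_pow_mul_one_sub_pow {N k : ℕ} (hk : k ≤ N) :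
    ∫ t in (0:ℝ)..1, N.choose k * t ^ k * (1 - t) ^ (N - k) = 1 / (N + 1) := by
  simp only [mul_assoc, intervalIntegral.integral_const_mul, integral_pow_mul_one_sub_pow,
    Nat.add_sub_cancel' hk, Nat.factorial_succ]
  rw [← Nat.choose_mul_factorial_mul_factorial hk]
  have : (N.choose k : ℝ) ≠ 0 := by exact_mod_cast (Nat.choose_pos hk).ne'
  push_cast
  field_simp

section Counting

variable {ι α : Type*} [Fintype ι] {A : Set α} [DecidablePred (· ∈ A)]

theorem mem_pi_ite_iff_filter_mem_eq [DecidableEq ι] {x : ι → α} {S : Finset ι} :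
    x ∈ Set.univ.pi (fun j => if j ∈ S then A else Aᶜ)
      ↔ ({j | x j ∈ A} : Finset ι) = S := by
  simp only [Set.mem_pi, Set.mem_univ, true_implies, Finset.ext_iff, mem_filter, mem_univ,
    true_and]
  exact forall_congr' fun j => by by_cases h : j ∈ S <;> simp [h]

theorem setOf_card_filter_mem_eq_biUnion [DecidableEq ι] (k : ℕ) :
    {x : ι → α | #{j | x j ∈ A} = k}
      = ⋃ S ∈ powersetCard k univ, Set.univ.pi fun j => if j ∈ S then A else Aᶜ := by
  ext x
  simp only [Set.mem_ofPred_eq, Set.mem_iUnion, mem_powersetCard_univ, exists_prop,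
    mem_pi_ite_iff_filter_mem_eq]
  exact ⟨fun h => ⟨_, h, rfl⟩, by rintro ⟨S, rfl, rfl⟩; rfl⟩

variable [MeasurableSpace α]

theorem measurable_card_filter_mem (hA : MeasurableSet A) :
    Measurable fun x : ι → α => #{j | x j ∈ A} := by
  simp only [Finset.card_filter]
  exact Finset.measurable_sum _ fun j _ =>
    Measurable.ite (hA.preimage (measurable_pi_apply j)) measurable_const measurable_const

theorem measure_pi_card_filter_mem_eq (ν : Measure α) [SigmaFinite ν] (hA : MeasurableSet A)
    (k : ℕ) :
    Measure.pi (fun _ : ι => ν) {x | #{j | x j ∈ A} = k}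
      = (Fintype.card ι).choose k * ν A ^ k * ν Aᶜ ^ (Fintype.card ι - k) := by
  classical
  have hcell : ∀ S ∈ powersetCard k univ,
      Measure.pi (fun _ : ι => ν) (Set.univ.pi fun j => if j ∈ S then A else Aᶜ)
        = ν A ^ k * ν Aᶜ ^ (Fintype.card ι - k) := by
    intro S hS
    rw [mem_powersetCard_univ] at hS
    simp only [Measure.pi_pi, apply_ite ν]
    rw [prod_ite, prod_const, prod_const, filter_mem_eq_inter, Finset.univ_inter, filter_not,
      filter_mem_eq_inter, Finset.univ_inter, ← Finset.compl_eq_univ_sdiff, card_compl, hS]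
  rw [setOf_card_filter_mem_eq_biUnion, measure_biUnion_finset, sum_congr rfl hcell, sum_const,
    card_powersetCard, Finset.card_univ, nsmul_eq_mul, mul_assoc]
  · intro S _ T _ hST
    refine Set.disjoint_left.2 fun x hxS hxT => hST ?_
    rw [mem_pi_ite_iff_filter_mem_eq] at hxS hxT
    rw [← hxS, ← hxT]
  · exact fun S _ => MeasurableSet.univ_pi fun j => by split_ifs <;> [exact hA; exact hA.compl]

end Counting

section OrderStatistics

variable {N : ℕ}

theorem orderStat_lt_iff (x : Fin N → ℝ) (i : Fin N) (t : ℝ) :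
    orderStat x i < t ↔ (i : ℕ) < #{j | x j < t} := by
  rw [← Tuple.lt_card_lt_iff_apply_lt_of_monotone (f := orderStat x) (Tuple.monotone_sort x)]
  rw [card_equiv (Tuple.sort x) (t := {j | x j < t}) fun j => by
    simp only [mem_filter, mem_univ, true_and]; rfl]

theorem measurable_orderStat (i : Fin N) : Measurable fun x : Fin N → ℝ => orderStat x i :=
  measurable_of_Iio fun t => by
    simp only [Set.preimage, Set.mem_Iio, orderStat_lt_iff]
    exact measurableSet_lt measurable_const (measurable_card_filter_mem measurableSet_Iio)

theorem sum_comp_orderStat {M : Type*} [AddCommMonoid M] (f : ℝ → M) (x : Fin N → ℝ) :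
    ∑ i, f (orderStat x i) = ∑ j, f (x j) :=
  Equiv.sum_comp (Tuple.sort x) (f ∘ x)

theorem measure_le_orderStat (ν : Measure ℝ) [SigmaFinite ν] (i : Fin N) (t : ℝ) :
    Measure.pi (fun _ : Fin N => ν) {x | t ≤ orderStat x i}
      = ∑ k ∈ range (i + 1), N.choose k * ν (Set.Iio t) ^ k * ν (Set.Ici t) ^ (N - k) := by
  have hset : {x : Fin N → ℝ | t ≤ orderStat x i}
      = (fun x : Fin N → ℝ => #{j | x j ∈ Set.Iio t}) ⁻¹' (range (i + 1) : Set ℕ) := by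
    ext x
    simp only [Set.mem_ofPred_eq, Set.mem_preimage, coe_range, Set.mem_Iio, ← not_lt,
      orderStat_lt_iff]
    omega
  have hcount := measurable_card_filter_mem (ι := Fin N) (measurableSet_Iio (a := t))
  rw [hset, ← sum_measure_preimage_singleton (range (i + 1))
    fun k _ => hcount (measurableSet_singleton k)]
  simp only [Set.preimage, Set.mem_singleton_iff,
    measure_pi_card_filter_mem_eq ν measurableSet_Iio,
    Fintype.card_fin, Set.compl_Iio]

end OrderStatistics

instance : IsProbabilityMeasure (volume.restrict (Set.Icc (0:ℝ) 1)) := ⟨by simp⟩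

noncomputable abbrev unifSample (N : ℕ) : Measure (Fin N → ℝ) :=
  Measure.pi fun _ => volume.restrict (Set.Icc (0:ℝ) 1)

section UniformSample

variable {N : ℕ}

theorem ae_orderStat_mem_Icc :
    ∀ᵐ x ∂unifSample N, ∀ i, orderStat x i ∈ Set.Icc (0:ℝ) 1 := by
  have hcoord : ∀ᵐ x ∂unifSample N, ∀ j, x j ∈ Set.Icc (0:ℝ) 1 :=
    ae_all_iff.2 fun j => (measurePreserving_eval _ j).quasiMeasurePreserving.ae
      (ae_restrict_mem measurableSet_Icc)
  filter_upwards [hcoord] with x hx i using hx _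

theorem integrable_orderStat (i : Fin N) :
    Integrable (fun x => orderStat x i) (unifSample N) :=
  .of_bound (measurable_orderStat i).aestronglyMeasurable 1 <| by
    filter_upwards [ae_orderStat_mem_Icc] with x hx
    rw [Real.norm_eq_abs, abs_le]
    constructor <;> linarith [(hx i).1, (hx i).2]

theorem measureReal_le_orderStat (i : Fin N) {t : ℝ} (ht : t ∈ Set.Icc (0:ℝ) 1) :
    (unifSample N).real {x | t ≤ orderStat x i}
      = ∑ k ∈ range (i + 1), N.choose k * t ^ k * (1 - t) ^ (N - k) := by
  have hIio : volume.restrict (Set.Icc (0:ℝ) 1) (Set.Iio t) = ENNReal.ofReal t := by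
    rw [Measure.restrict_apply measurableSet_Iio,
      show Set.Iio t ∩ Set.Icc 0 1 = Set.Ico 0 t by ext; simp; grind [ht.2], Real.volume_Ico,
      sub_zero]
  have hIci : volume.restrict (Set.Icc (0:ℝ) 1) (Set.Ici t) = ENNReal.ofReal (1 - t) := by
    rw [Measure.restrict_apply measurableSet_Ici,
      show Set.Ici t ∩ Set.Icc 0 1 = Set.Icc t 1 by ext; simp; grind [ht.1], Real.volume_Icc]
  rw [measureReal_def, measure_le_orderStat, hIio, hIci, ENNReal.toReal_sum]
  · simp [ENNReal.toReal_ofReal, ht.1, ht.2]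
  · intro k _
    finiteness

theorem integral_orderStat (i : Fin N) :
    ∫ x, orderStat x i ∂unifSample N = (i + 1) / (N + 1) := by
  rw [(integrable_orderStat i).integral_eq_integral_Ioc_meas_le (M := 1)
      (by filter_upwards [ae_orderStat_mem_Icc] with x hx using (hx i).1)
      (by filter_upwards [ae_orderStat_mem_Icc] with x hx using (hx i).2),
    setIntegral_congr_fun measurableSet_Ioc fun t ht =>
      measureReal_le_orderStat i (Set.Ioc_subset_Icc_self ht),
    ← intervalIntegral.integral_of_le zero_le_one, intervalIntegral.integral_finsetSum
      fun k _ => (by fun_prop : Continuous _).intervalIntegrable _ _]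
  rw [sum_congr rfl fun k hk => integral_choose_mul_pow_mul_one_sub_pow (by
    have := mem_range.1 hk; omega)]
  simp only [sum_const, card_range, nsmul_eq_mul]
  push_cast
  ring

theorem sum_orderStat_sq_eq :
    (fun x : Fin N → ℝ => ∑ i, orderStat x i ^ 2) = fun x => ∑ j, x j ^ 2 :=
  funext fun x => sum_comp_orderStat (· ^ 2) x

theorem integrable_sq_coord (j : Fin N) : Integrable (fun x => x j ^ 2) (unifSample N) :=
  integrable_comp_eval (μ := fun _ => volume.restrict (Set.Icc (0:ℝ) 1)) (i := j)
    (f := fun t => t ^ 2) (continuous_pow 2).integrableOn_Icc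

theorem integral_sq_coord (j : Fin N) : ∫ x, x j ^ 2 ∂unifSample N = 1 / 3 := by
  rw [integral_comp_eval (μ := fun _ => volume.restrict (Set.Icc (0:ℝ) 1)) (i := j)
    (f := fun t => t ^ 2) (by fun_prop), integral_Icc_eq_integral_Ioc,
    ← intervalIntegral.integral_of_le zero_le_one, integral_pow]
  norm_num

theorem integrable_sum_orderStat_sq :
    Integrable (fun x => ∑ i, orderStat x i ^ 2) (unifSample N) := by
  rw [sum_orderStat_sq_eq]
  exact integrable_finsetSum _ fun j _ => integrable_sq_coord j

theorem integral_sum_orderStat_sq : ∫ x, ∑ i, orderStat x i ^ 2 ∂unifSample N = N / 3 := by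
  rw [sum_orderStat_sq_eq, integral_finsetSum _ fun j _ => integrable_sq_coord j]
  simp only [integral_sq_coord, sum_const, Finset.card_univ, Fintype.card_fin, nsmul_eq_mul]
  ring

end UniformSample

theorem unifPair_eq_prod (N : ℕ) : unifPair N = (unifSample N).prod (unifSample N) := rfl

theorem integrable_orderStat_mul_orderStat {N : ℕ} (i j : Fin N) :
    Integrable (fun q : (Fin N → ℝ) × (Fin N → ℝ) => orderStat q.1 i * orderStat q.2 j)
      (unifPair N) :=
  (integrable_orderStat i).mul_prod (integrable_orderStat j)

theorem integral_orderStat_mul_orderStat {N : ℕ} (i j : Fin N) :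
    ∫ q, orderStat q.1 i * orderStat q.2 j ∂unifPair N = (i + 1) * (j + 1) / (N + 1) ^ 2 := by
  rw [unifPair_eq_prod, integral_prod_mul (fun x => orderStat x i) (fun x => orderStat x j),
    integral_orderStat, integral_orderStat]
  field_simp

theorem integral_sum_orderStat_fst_sq {N : ℕ} :
    ∫ q, ∑ i, orderStat q.1 i ^ 2 ∂unifPair N = N / 3 := by
  rw [unifPair_eq_prod, integral_fun_fst fun x => ∑ i, orderStat x i ^ 2,
    integral_sum_orderStat_sq, probReal_univ, one_smul]

theorem integral_sum_orderStat_snd_sq {N : ℕ} :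
    ∫ q, ∑ i, orderStat q.2 i ^ 2 ∂unifPair N = N / 3 := by
  rw [unifPair_eq_prod, integral_fun_snd fun x => ∑ i, orderStat x i ^ 2,
    integral_sum_orderStat_sq, probReal_univ, one_smul]

theorem add_sum_fin_eq_add_add_sum {M : Type*} [AddCommMonoid M] {n : ℕ} (s : Fin (n + 1) → M) :
    ∑ i, s i + ∑ i, s i = s 0 + s (Fin.last n) + ∑ k : Fin n, (s k.castSucc + s k.succ) := by
  rw [sum_add_distrib]
  nth_rw 1 [Fin.sum_univ_castSucc]
  rw [Fin.sum_univ_succ]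
  abel

noncomputable def crisscrossEdgeProductSum {M : ℕ} (r b : Fin (M + 1) → ℝ) : ℝ :=
  r 0 * b 0 + r (Fin.last M) * b (Fin.last M)
    + ∑ k : Fin M, (r k.castSucc * b k.succ + r k.succ * b k.castSucc)

theorem crisscrossCostSq_succ (M : ℕ) (h : 1 ≤ M + 1)
    (q : (Fin (M + 1) → ℝ) × (Fin (M + 1) → ℝ)) :
    crisscrossCostSq (M + 1) h q
      = 2 * ∑ i, orderStat q.1 i ^ 2 + 2 * ∑ i, orderStat q.2 i ^ 2
        - 2 * crisscrossEdgeProductSum (orderStat q.1) (orderStat q.2) := by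
  set r := orderStat q.1
  set b := orderStat q.2
  have hr := add_sum_fin_eq_add_add_sum fun i => r i ^ 2
  have hb := add_sum_fin_eq_add_add_sum fun i => b i ^ 2
  have hedges : ∑ k : Fin M, ((b k.succ - r k.castSucc) ^ 2 + (r k.succ - b k.castSucc) ^ 2)
      = ∑ k : Fin M, (r k.castSucc ^ 2 + r k.succ ^ 2)
        + ∑ k : Fin M, (b k.castSucc ^ 2 + b k.succ ^ 2)
        - 2 * ∑ k : Fin M, (r k.castSucc * b k.succ + r k.succ * b k.castSucc) := by
    rw [← sum_add_distrib, mul_sum, ← sum_sub_distrib]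
    exact sum_congr rfl fun k _ => by ring
  change (r 0 - b 0) ^ 2 + (r (Fin.last M) - b (Fin.last M)) ^ 2
    + ∑ k : Fin M, ((b k.succ - r k.castSucc) ^ 2 + (r k.succ - b k.castSucc) ^ 2) = _
  rw [crisscrossEdgeProductSum]
  linear_combination hedges - hr - hb

theorem integrable_crisscrossEdgeProductSum (M : ℕ) :
    Integrable (fun q : (Fin (M + 1) → ℝ) × (Fin (M + 1) → ℝ) =>
      crisscrossEdgeProductSum (orderStat q.1) (orderStat q.2)) (unifPair (M + 1)) := by
  have hprod := integrable_orderStat_mul_orderStat (N := M + 1)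
  exact ((hprod _ _).add (hprod _ _)).add
    (integrable_finsetSum _ fun k _ => (hprod _ _).add (hprod _ _))

theorem integral_crisscrossEdgeProductSum (M : ℕ) :
    ∫ q, crisscrossEdgeProductSum (orderStat q.1) (orderStat q.2) ∂unifPair (M + 1)
      = (1 + (M + 1) ^ 2 + 2 * ∑ k ∈ range M, ((k:ℝ) + 1) * (k + 2)) / (M + 2) ^ 2 := by
  have hprod := integrable_orderStat_mul_orderStat (N := M + 1)
  have hends : Integrable (fun q : (Fin (M + 1) → ℝ) × (Fin (M + 1) → ℝ) =>
      orderStat q.1 0 * orderStat q.2 0 + orderStat q.1 (Fin.last M) * orderStat q.2 (Fin.last M))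
      (unifPair (M + 1)) :=
    (hprod _ _).add (hprod _ _)
  have hedge : ∀ k : Fin M, Integrable (fun q : (Fin (M + 1) → ℝ) × (Fin (M + 1) → ℝ) =>
      orderStat q.1 k.castSucc * orderStat q.2 k.succ
        + orderStat q.1 k.succ * orderStat q.2 k.castSucc) (unifPair (M + 1)) :=
    fun k => (hprod _ _).add (hprod _ _)
  simp only [crisscrossEdgeProductSum]
  rw [integral_add hends (integrable_finsetSum _ fun k _ => hedge k),
    integral_add (hprod _ _) (hprod _ _),
    integral_finsetSum _ fun k _ => hedge k]
  simp only [fun k : Fin M => integral_add (hprod k.castSucc k.succ) (hprod k.succ k.castSucc),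
    integral_orderStat_mul_orderStat, Fin.val_zero, Fin.val_last, Fin.val_castSucc, Fin.val_succ]
  rw [Fin.sum_univ_eq_sum_range (fun k =>
      ((k:ℝ) + 1) * ((k + 1 : ℕ) + 1) / ((M + 1 : ℕ) + 1) ^ 2
        + ((k + 1 : ℕ) + 1) * (k + 1) / ((M + 1 : ℕ) + 1) ^ 2),
    mul_sum, add_div, sum_div]
  congr 1
  · push_cast; ring
  · exact sum_congr rfl fun k _ => by push_cast; ring

theorem integral_crisscrossCostSq_succ (M : ℕ) (h : 1 ≤ M + 1) :
    ∫ q, crisscrossCostSq (M + 1) h q ∂unifPair (M + 1)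
      = 4 * (M + 1) / 3
        - 2 * (1 + (M + 1) ^ 2 + 2 * ∑ k ∈ range M, ((k:ℝ) + 1) * (k + 2)) / (M + 2) ^ 2 := by
  have hsq₁ : Integrable (fun q : (Fin (M + 1) → ℝ) × (Fin (M + 1) → ℝ) =>
      2 * ∑ i, orderStat q.1 i ^ 2) (unifPair (M + 1)) :=
    (integrable_sum_orderStat_sq.comp_fst _).const_mul 2
  have hsq₂ : Integrable (fun q : (Fin (M + 1) → ℝ) × (Fin (M + 1) → ℝ) =>
      2 * ∑ i, orderStat q.2 i ^ 2) (unifPair (M + 1)) :=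
    (integrable_sum_orderStat_sq.comp_snd _).const_mul 2
  simp only [crisscrossCostSq_succ]
  rw [integral_sub, integral_add hsq₁ hsq₂, integral_const_mul, integral_const_mul,
    integral_const_mul, integral_sum_orderStat_fst_sq, integral_sum_orderStat_snd_sq,
    integral_crisscrossEdgeProductSum]
  · push_cast
    ring
  · exact hsq₁.add hsq₂
  · exact (integrable_crisscrossEdgeProductSum M).const_mul 2

theorem sum_range_add_one_mul_add_two (M : ℕ) :
    ∑ k ∈ range M, ((k:ℝ) + 1) * (k + 2) = M * (M + 1) * (M + 2) / 3 := by
  induction M with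
  | zero => simp
  | succ M ih => rw [sum_range_succ, ih]; push_cast; ring

/-- **Exact average optimal cost for `p = 2`.**  For every `N ≥ 2` the average cost of
the optimal (criss-cross) Hamiltonian cycle of the one-dimensional bipartite Euclidean
TSP with cost exponent `p = 2` and uniformly distributed points is
`(2/3)·(N² + 4N − 3)/(N+1)²`. -/
theorem average_optimal_cost_p2 (N : ℕ) (hN : 2 ≤ N) :
    ∫ q, crisscrossCostSq N (by omega) q ∂(unifPair N)
      = 2 / 3 * ((N : ℝ) ^ 2 + 4 * N - 3) / ((N : ℝ) + 1) ^ 2 := by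
  obtain ⟨M, rfl⟩ : ∃ M, N = M + 1 := ⟨N - 1, by omega⟩
  rw [integral_crisscrossCostSq_succ, sum_range_add_one_mul_add_two]
  push_cast
  field_simp
  ring
end
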